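/- arXiv:2207.07607 — 4 statements merged into one kernel-verified Lean document; each statement's English description precedes it below -/
import Mathlib

section
/- Let ε ∈ (0, 1/120) and δ ∈ (2ε, 1/60). Let G be a bipartite graph and let H be a (β, (1−ε)β)-EDCS of G, where β > (1−ε)β ≥ 1. Let Vmid := {v : deg_H(v) ∈ [0.4β, 0.6β]}, Vlow := {v : deg_H(v) ∈ [0, 0.2β]}, and H' := H[Vlow, Vmid]. If μ(H) ≤ (2/3 + δ)·μ(G), then μ(H') ≥ (2/3 − 120·√δ)·μ(G). -/
open scoped Classical

noncomputable section

variable {V : Type*}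

/-- `M` is a matching of `G`: a set of edges of `G` that are pairwise vertex-disjoint. -/
def IsMatchingSet (G : SimpleGraph V) (M : Set (Sym2 V)) : Prop :=
  M ⊆ G.edgeSet ∧ M.Pairwise fun e f => ∀ v : V, v ∈ e → v ∉ f

/-- The set of vertices matched by the edge set `M`. -/
def mVerts (M : Set (Sym2 V)) : Set V := {v | ∃ e ∈ M, v ∈ e}

/-- The matching number of `G`. -/
def nu (G : SimpleGraph V) : ℕ :=
  sSup {n | ∃ M : Set (Sym2 V), IsMatchingSet G M ∧ M.ncard = n}

/-- The bipartite subgraph of `G` consisting of the edges of `G` with one endpoint in `X`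
and the other endpoint in `Y`. -/
def between (G : SimpleGraph V) (X Y : Set V) : SimpleGraph V where
  Adj u v := G.Adj u v ∧ ((u ∈ X ∧ v ∈ Y) ∨ (u ∈ Y ∧ v ∈ X))
  symm := ⟨fun u v h => ⟨h.1.symm, h.2.elim (fun hh => Or.inr ⟨hh.2, hh.1⟩) (fun hh => Or.inl ⟨hh.2, hh.1⟩)⟩⟩
  loopless := ⟨fun v h => G.loopless.irrefl v h.1⟩

/-- The induced subgraph of `G` on the vertex set `U` (on the same vertex type). -/
def inducedOn (G : SimpleGraph V) (U : Set V) : SimpleGraph V where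
  Adj u v := G.Adj u v ∧ u ∈ U ∧ v ∈ U
  symm := ⟨fun u v h => ⟨h.1.symm, h.2.2, h.2.1⟩⟩
  loopless := ⟨fun v h => G.loopless.irrefl v h.1⟩

/-- The degree of `v` in `H`. -/
def deg (H : SimpleGraph V) (v : V) : ℕ := (H.neighborSet v).ncard

/-- `H` is a `(β, βm)`-EDCS of `G`. -/
def IsEDCS (G H : SimpleGraph V) (β βm : ℝ) : Prop :=
  H ≤ G ∧ (∀ u v, H.Adj u v → (deg H u + deg H v : ℝ) ≤ β) ∧
    (∀ u v, G.Adj u v → ¬ H.Adj u v → βm ≤ (deg H u + deg H v : ℝ))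

/-- The neighborhood of a set `A` in `H`. -/
def nbhd (H : SimpleGraph V) (A : Set V) : Set V := {v | ∃ a ∈ A, H.Adj a v}

/-- The edges of `M` with one endpoint in `X` and the other endpoint in `Y`. -/
def crossE (M : Set (Sym2 V)) (X Y : Set V) : Set (Sym2 V) :=
  {e | e ∈ M ∧ ∃ u v, e = s(u, v) ∧ u ∈ X ∧ v ∈ Y}

/-- `M` is a maximal matching of `G`. -/
def IsMaximalMatching (G : SimpleGraph V) (M : Set (Sym2 V)) : Prop :=
  IsMatchingSet G M ∧ ∀ M' : Set (Sym2 V), IsMatchingSet G M' → M ⊆ M' → M' = M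

/-!
Take a vertex cover `C` of `H` with `|C| ≤ μ(H)` (König) and a maximum matching `M` of `G`, and
sort the edges of `M` by their number of endpoints in `C`. Bare edges (none in `C`) are not in
`H`, so their endpoints have degree sum at least `(1 - ε)β`. Every `c ∈ C` spreads one unit of
charge evenly over its `H`-edges; a bare endpoint of degree `t` has all its neighbours in `C` and
receives at least `t / (β - t)`, and the two endpoints of a bare edge can return `2 - 4ε` out of
what they receive. The rest, `|C| - (2 - 4ε) · #bare`, is at most `5δ μ(G)` by tightness, but it is
also at least a constant times the number of cover vertices of degree outside `[0.4β, 0.6β]` and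
of uncovered, non-bare vertices of degree above `0.2β`. The remaining edges of `M` with one
endpoint in `C` are edges of `H'`, and tightness forces almost `2 μ(G) / 3` of them.
-/

open Finset

/-- Lower bound for the charge received by an uncovered vertex of degree `t`: each of its `t`
neighbours lies in the cover and has degree at most `β - t`. -/
def minLoad (β t : ℝ) : ℝ := t / (β - t)

/-- Lower bound for the degree of the other end of a non-`H` edge at a vertex of degree `t`. -/
def partnerDeg (β ε t : ℝ) : ℝ := max ((1 - ε) * β - t) 0

/-- The part of the `2 - 4ε` owed by a bare edge that its endpoint of degree `t` pays. It never
exceeds `minLoad β t`, and the parts of the two ends of a non-`H` edge add up to at least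
`2 - 4ε`. -/
def bareShare (β ε t : ℝ) : ℝ :=
  max ((2 - 4 * ε + minLoad β t - minLoad β (partnerDeg β ε t)) / 2) 0

section BareShare

variable {β ε : ℝ}

lemma minLoad_nonneg {x : ℝ} (hx : 0 ≤ x) (hxβ : x < β) : 0 ≤ minLoad β x :=
  div_nonneg hx (by linarith)

lemma minLoad_mono {x y : ℝ} (hx : 0 ≤ x) (hxy : x ≤ y) (hyβ : y < β) :
    minLoad β x ≤ minLoad β y := by
  unfold minLoad
  rw [div_le_div_iff₀ (by linarith) (by linarith)]
  nlinarith

lemma minLoad_div_self {x : ℝ} (hx : x ≠ 0) : minLoad β x / x = (β - x)⁻¹ := by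
  rw [minLoad, div_right_comm, div_self hx, one_div]

@[simp]
lemma minLoad_zero : minLoad β 0 = 0 := by simp [minLoad]

lemma quarter_le_minLoad {x : ℝ} (hx : β / 5 ≤ x) (hxβ : x < β) : 1 / 4 ≤ minLoad β x := by
  rw [minLoad, le_div_iff₀ (by linarith)]
  linarith

lemma minLoad_one_sub_mul (hβ : 0 < β) :
    minLoad β ((1 - ε) * β) = (1 - ε) / ε := by
  rw [minLoad, show β - (1 - ε) * β = ε * β by ring, mul_comm ε, ← div_div,
    mul_div_assoc, div_self hβ.ne', mul_one]

lemma partnerDeg_of_le {x : ℝ} (hx : x ≤ (1 - ε) * β) : partnerDeg β ε x = (1 - ε) * β - x :=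
  max_eq_left (by linarith)

lemma partnerDeg_of_ge {x : ℝ} (hx : (1 - ε) * β ≤ x) : partnerDeg β ε x = 0 :=
  max_eq_right (by linarith)

/-- By convexity of `minLoad`, the sum is least at `x = (1 - ε) β / 2`, where it is
`2 (1 - ε) / (1 + ε)`. -/
lemma two_sub_four_mul_le_minLoad_add (hε0 : 0 < ε) (hε : ε < 1 / 120) (hβ : 0 < β) {x : ℝ}
    (hx : 0 ≤ x) (hxβ : x < β) :
    2 - 4 * ε ≤ minLoad β x + minLoad β (partnerDeg β ε x) := by
  rcases le_total ((1 - ε) * β) x with hs | hs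
  · have h1 := minLoad_mono (by nlinarith) hs hxβ
    rw [minLoad_one_sub_mul hβ] at h1
    have h2 : 2 - 4 * ε ≤ (1 - ε) / ε := by rw [le_div_iff₀ hε0]; nlinarith
    rw [partnerDeg_of_ge hs, minLoad_zero, add_zero]
    linarith
  · rw [partnerDeg_of_le hs, minLoad, minLoad, div_add_div _ _ (by linarith) (by nlinarith),
      le_div_iff₀ (mul_pos (by linarith) (by nlinarith))]
    nlinarith [sq_nonneg (β - x - (β - ((1 - ε) * β - x))), sq_nonneg (ε * β)]

lemma bareShare_le_minLoad (hε0 : 0 < ε) (hε : ε < 1 / 120) (hβ : 0 < β) {x : ℝ}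
    (hx : 0 ≤ x) (hxβ : x < β) : bareShare β ε x ≤ minLoad β x :=
  max_le (by linarith [two_sub_four_mul_le_minLoad_add hε0 hε hβ hx hxβ])
    (minLoad_nonneg hx hxβ)

lemma bareShare_zero (hε0 : 0 < ε) (hε : ε < 1 / 120) (hβ : 0 < β) : bareShare β ε 0 = 0 := by
  have h : 2 - 4 * ε ≤ (1 - ε) / ε := by rw [le_div_iff₀ hε0]; nlinarith
  rw [bareShare, partnerDeg_of_le (by nlinarith), sub_zero, minLoad_one_sub_mul hβ,
    minLoad_zero]
  exact max_eq_right (by linarith)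

lemma two_sub_four_mul_le_bareShare_add {u v : ℝ}
    (hu : 0 ≤ u) (huβ : u < β) (hv : 0 ≤ v) (hvβ : v < β) (huv : (1 - ε) * β ≤ u + v) :
    2 - 4 * ε ≤ bareShare β ε u + bareShare β ε v := by
  have hu' : minLoad β (partnerDeg β ε u) ≤ minLoad β v :=
    minLoad_mono (le_max_right _ _) (max_le (by linarith) hv) hvβ
  have hv' : minLoad β (partnerDeg β ε v) ≤ minLoad β u :=
    minLoad_mono (le_max_right _ _) (max_le (by linarith) hu) huβ
  have qu := le_max_left ((2 - 4 * ε + minLoad β u - minLoad β (partnerDeg β ε u)) / 2) 0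
  have qv := le_max_left ((2 - 4 * ε + minLoad β v - minLoad β (partnerDeg β ε v)) / 2) 0
  rw [bareShare, bareShare]
  linarith

lemma two_sub_four_mul_le_minLoad_add_of_ge (hε0 : 0 < ε) (hε : ε < 1 / 120) (hβ : 0 < β) {x : ℝ}
    (hx : 59 / 100 * β ≤ x) (hxβ : x < β) :
    2 - 4 * ε ≤ 39 / 40 * minLoad β x + minLoad β (partnerDeg β ε x) := by
  rcases le_total ((1 - ε) * β) x with hs | hs
  · have h1 := minLoad_mono (by nlinarith) hs hxβ
    rw [minLoad_one_sub_mul hβ] at h1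
    have h2 : 2 - 4 * ε ≤ 39 / 40 * ((1 - ε) / ε) := by
      rw [mul_div_assoc', le_div_iff₀ hε0]; nlinarith
    rw [partnerDeg_of_ge hs, minLoad_zero, add_zero]
    linarith
  · have hd : 0 < ε * β + x := by nlinarith
    rw [partnerDeg_of_le hs, minLoad, minLoad, show β - ((1 - ε) * β - x) = ε * β + x by ring,
      mul_div_assoc', div_add_div _ _ (by linarith) hd.ne', le_div_iff₀ (mul_pos (by linarith) hd)]
    nlinarith [mul_nonneg hε0.le (sub_nonneg.2 hx), mul_nonneg hε0.le (sub_nonneg.2 hs),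
      mul_pos hε0 hβ, mul_pos (mul_pos hε0 hε0) hβ, mul_nonneg (mul_nonneg hε0.le hε0.le) hd.le]

lemma two_sub_four_mul_add_tenth_le_minLoad_add (hε0 : 0 < ε) (hε : ε < 1 / 120) (hβ : 0 < β)
    {x : ℝ} (hx0 : 0 ≤ x) (hx : x ≤ 2 / 5 * β) :
    2 - 4 * ε + 1 / 10 ≤ minLoad β x + minLoad β (partnerDeg β ε x) := by
  have hd : 0 < ε * β + x := by nlinarith
  have hsmall : 0 ≤ 1 / 120 - ε := by linarith
  have ht : 0 ≤ 2 / 5 * β - x := by linarith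
  rw [partnerDeg_of_le (by nlinarith), minLoad, minLoad,
    show β - ((1 - ε) * β - x) = ε * β + x by ring,
    div_add_div _ _ (by linarith) hd.ne', le_div_iff₀ (mul_pos (by linarith) hd)]
  nlinarith [mul_nonneg hsmall (sq_nonneg (2 / 5 * β - x)), mul_nonneg ht hβ.le,
    mul_nonneg hsmall (mul_nonneg ht hβ.le), mul_nonneg hsmall (sq_nonneg β),
    mul_nonneg (mul_nonneg hε0.le hε0.le) (mul_nonneg hβ.le (by linarith : (0:ℝ) ≤ β - x))]

lemma bareShare_div_le (hε0 : 0 < ε) (hε : ε < 1 / 120) (hβ : 0 < β) {a x : ℝ}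
    (ha : 0 < a) (hx : 0 < x) (hax : a + x ≤ β) : bareShare β ε x / x ≤ a⁻¹ :=
  calc bareShare β ε x / x ≤ minLoad β x / x :=
        div_le_div_of_nonneg_right (bareShare_le_minLoad hε0 hε hβ hx.le (by linarith)) hx.le
    _ = (β - x)⁻¹ := minLoad_div_self hx.ne'
    _ ≤ a⁻¹ := inv_anti₀ ha (by linarith)

lemma bareShare_div_le_of_light (hε0 : 0 < ε) (hε : ε < 1 / 120) (hβ : 0 < β) {a x : ℝ}
    (ha0 : 0 < a) (ha : a < 2 / 5 * β) (hx : 0 < x) (hax : a + x ≤ β) :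
    bareShare β ε x / x ≤ 79 / 80 * a⁻¹ := by
  have hinv : 79 / 80 * a⁻¹ = (80 / 79 * a)⁻¹ := by rw [mul_inv]; norm_num
  rcases le_total x (59 / 100 * β) with hx59 | hx59
  · calc bareShare β ε x / x ≤ (β - x)⁻¹ :=
          bareShare_div_le (a := β - x) hε0 hε hβ (by linarith) hx (by linarith)
      _ ≤ 79 / 80 * a⁻¹ := by rw [hinv]; exact inv_anti₀ (by positivity) (by linarith)
  · have hq : bareShare β ε x ≤ 79 / 80 * minLoad β x :=
      max_le (by linarith [two_sub_four_mul_le_minLoad_add_of_ge hε0 hε hβ hx59 (by linarith)])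
        (by have := minLoad_nonneg hx.le (by linarith : x < β); positivity)
    calc bareShare β ε x / x ≤ 79 / 80 * minLoad β x / x := div_le_div_of_nonneg_right hq hx.le
      _ = 79 / 80 * (β - x)⁻¹ := by rw [mul_div_assoc, minLoad_div_self hx.ne']
      _ ≤ 79 / 80 * a⁻¹ := by gcongr; linarith

lemma bareShare_div_le_of_heavy (hε0 : 0 < ε) (hε : ε < 1 / 120) (hβ : 0 < β) {a x : ℝ}
    (ha : 3 / 5 * β < a) (hx : 0 < x) (hax : a + x ≤ β) :
    bareShare β ε x / x ≤ 79 / 80 * a⁻¹ := by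
  have ha0 : 0 < a := by linarith
  have hE := two_sub_four_mul_add_tenth_le_minLoad_add hε0 hε hβ hx.le (by linarith : x ≤ 2 / 5 * β)
  rcases le_total (minLoad β x) (1 / 20) with hf | hf
  · have hq : bareShare β ε x = 0 := max_eq_right (by linarith)
    rw [hq, zero_div]
    positivity
  · have hq : bareShare β ε x ≤ minLoad β x - 1 / 20 := max_le (by linarith) (by linarith)
    calc bareShare β ε x / x ≤ (minLoad β x - 1 / 20) / x := div_le_div_of_nonneg_right hq hx.le
      _ = (β - x)⁻¹ - (20 * x)⁻¹ := by rw [sub_div, minLoad_div_self hx.ne', mul_inv]; ring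
      _ ≤ a⁻¹ - (80 * a)⁻¹ := by gcongr <;> linarith
      _ = 79 / 80 * a⁻¹ := by rw [mul_inv]; ring

lemma bareShare_div_le_of_not_mid (hε0 : 0 < ε) (hε : ε < 1 / 120) (hβ : 0 < β) {a x : ℝ}
    (ha0 : 0 < a) (ha : a < 2 / 5 * β ∨ 3 / 5 * β < a) (hx : 0 < x) (hax : a + x ≤ β) :
    bareShare β ε x / x ≤ 79 / 80 * a⁻¹ :=
  ha.elim (bareShare_div_le_of_light hε0 hε hβ ha0 · hx hax)
    (bareShare_div_le_of_heavy hε0 hε hβ · hx hax)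

end BareShare

lemma Finset.card_le_card_biUnion_disjSum {ι α : Type*} [DecidableEq α] {t : ι → Finset α}
    {k : ℕ} (h : ∀ s : Finset ι, #s ≤ #(s.biUnion t) + k) (s : Finset ι) :
    #s ≤ #(s.biUnion fun i => (t i).disjSum (univ : Finset (Fin k))) := by
  rcases s.eq_empty_or_nonempty with rfl | ⟨i, hi⟩
  · simp
  calc #s ≤ #((s.biUnion t).disjSum (univ : Finset (Fin k))) := by
        rw [card_disjSum, card_univ, Fintype.card_fin]; exact h s
    _ ≤ _ := card_le_card fun x hx => by
        rcases x with a | b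
        · obtain ⟨j, hj, ha⟩ := mem_biUnion.1 (inl_mem_disjSum.1 hx)
          exact mem_biUnion.2 ⟨j, hj, inl_mem_disjSum.2 ha⟩
        · exact mem_biUnion.2 ⟨i, hi, inr_mem_disjSum.2 (mem_univ b)⟩

/-- Hall's theorem with deficiency `k`, obtained by adjoining `k` dummy elements to every `t i`. -/
theorem Finset.exists_partialMatching_of_card_le_card_biUnion_add {ι α : Type*} [Fintype ι]
    [DecidableEq α] (t : ι → Finset α) (k : ℕ) (h : ∀ s : Finset ι, #s ≤ #(s.biUnion t) + k) :
    ∃ P : Finset (ι × α), Fintype.card ι ≤ #P + k ∧ (∀ p ∈ P, p.2 ∈ t p.1) ∧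
      Set.InjOn Prod.fst (P : Set (ι × α)) ∧ Set.InjOn Prod.snd (P : Set (ι × α)) := by
  obtain ⟨g, hg, hgt⟩ :=
    (all_card_le_biUnion_card_iff_exists_injective _).1 (card_le_card_biUnion_disjSum h)
  let P : Finset (ι × α) :=
    univ.biUnion fun i => ((t i).filter fun a => g i = .inl a).image (Prod.mk i)
  have hP {p : ι × α} : p ∈ P ↔ p.2 ∈ t p.1 ∧ g p.1 = .inl p.2 := by
    constructor
    · simp only [P, mem_biUnion, mem_image, mem_filter]
      rintro ⟨i, -, a, ⟨ha, hga⟩, rfl⟩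
      exact ⟨ha, hga⟩
    · intro hp
      exact mem_biUnion.2 ⟨p.1, mem_univ _, mem_image.2 ⟨p.2, mem_filter.2 hp, rfl⟩⟩
  have hdummy : #(univ.filter fun i => ∀ a, g i ≠ .inl a) ≤ k := by
    calc _ ≤ #((univ : Finset (Fin k)).map .inr) := card_le_card_of_injOn g (fun i hi => by
            rcases hx : g i with a | b
            · exact absurd hx ((mem_filter.1 hi).2 _)
            · simp) hg.injOn
      _ = k := by simp
  refine ⟨P, ?_, fun p hp => (hP.1 hp).1, ?_, ?_⟩
  · calc Fintype.card ι ≤ #(P.image Prod.fst ∪ univ.filter fun i => ∀ a, g i ≠ .inl a) := by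
          refine card_le_card fun i _ => ?_
          rcases hx : g i with a | b
          · refine mem_union_left _ (mem_image.2 ⟨(i, a), hP.2 ⟨?_, hx⟩, rfl⟩)
            simpa [hx] using hgt i
          · exact mem_union_right _ (mem_filter.2 ⟨mem_univ _, by simp [hx]⟩)
      _ ≤ #P + k := (card_union_le _ _).trans (add_le_add card_image_le hdummy)
  · intro p hp q hq hpq
    have h := (hP.1 hp).2
    rw [hpq, (hP.1 hq).2, Sum.inl.injEq] at h
    exact Prod.ext hpq h.symm
  · intro p hp q hq hpq
    have h : g p.1 = g q.1 := by rw [(hP.1 hp).2, (hP.1 hq).2, hpq]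
    exact Prod.ext (hg h) hpq

section Matching

variable [Fintype V] {G : SimpleGraph V}

lemma bddAbove_matching_ncard (G : SimpleGraph V) :
    BddAbove {n | ∃ M : Set (Sym2 V), IsMatchingSet G M ∧ M.ncard = n} :=
  ⟨Nat.card (Sym2 V), by rintro n ⟨M, -, rfl⟩; exact Set.ncard_le_card M⟩

lemma IsMatchingSet.ncard_le_nu {M : Set (Sym2 V)} (hM : IsMatchingSet G M) : M.ncard ≤ nu G :=
  le_csSup (bddAbove_matching_ncard G) ⟨M, hM, rfl⟩

lemma exists_isMatchingSet_card_eq_nu (G : SimpleGraph V) :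
    ∃ M : Finset (Sym2 V), IsMatchingSet G M ∧ #M = nu G := by
  obtain ⟨M, hM, hcard⟩ := Nat.sSup_mem
    (s := {n | ∃ M : Set (Sym2 V), IsMatchingSet G M ∧ M.ncard = n})
    ⟨0, ∅, ⟨Set.empty_subset _, Set.pairwise_empty _⟩, Set.ncard_empty _⟩
    (bddAbove_matching_ncard G)
  exact ⟨M.toFinite.toFinset, by simpa using hM, by rwa [← Set.ncard_eq_toFinset_card]⟩

lemma card_filter_mem_edgeSet_le_nu {M : Finset (Sym2 V)} (hM : IsMatchingSet G M)
    (H' : SimpleGraph V) : #(M.filter (· ∈ H'.edgeSet)) ≤ nu H' := by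
  have h : IsMatchingSet H' ↑(M.filter (· ∈ H'.edgeSet)) :=
    ⟨fun e he => (mem_filter.1 he).2, hM.2.mono fun e he => (mem_filter.1 he).1⟩
  have := h.ncard_le_nu
  rwa [Set.ncard_coe_finset] at this

lemma card_le_nu_of_injOn {P : Finset (V × V)} (hadj : ∀ p ∈ P, G.Adj p.1 p.2)
    (hfst : Set.InjOn Prod.fst (P : Set (V × V))) (hsnd : Set.InjOn Prod.snd (P : Set (V × V)))
    (hsep : ∀ p ∈ P, ∀ q ∈ P, p.1 ≠ q.2) : #P ≤ nu G := by
  have hinj : Set.InjOn (fun p : V × V => s(p.1, p.2)) P := by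
    intro p hp q hq hpq
    rcases Sym2.eq_iff.1 hpq with ⟨h1, h2⟩ | ⟨h1, -⟩
    · exact Prod.ext h1 h2
    · exact absurd h1 (hsep p hp q hq)
  have hM : IsMatchingSet G (P.image fun p => s(p.1, p.2) : Finset (Sym2 V)) := by
    refine ⟨fun e he => ?_, fun e he f hf hef v hve hvf => ?_⟩
    · obtain ⟨p, hp, rfl⟩ := mem_image.1 he
      exact hadj p hp
    · obtain ⟨p, hp, rfl⟩ := mem_image.1 he
      obtain ⟨q, hq, rfl⟩ := mem_image.1 hf
      have hpq : p ≠ q := fun h => hef (h ▸ rfl)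
      rcases Sym2.mem_iff.1 hve with rfl | rfl <;> rcases Sym2.mem_iff.1 hvf with h | h
      · exact hpq (hfst hp hq h)
      · exact hsep p hp q hq h
      · exact hsep q hq p hp h.symm
      · exact hpq (hsnd hp hq h)
  have h := hM.ncard_le_nu
  rwa [Set.ncard_coe_finset, card_image_of_injOn hinj] at h

/-- König: for `S` of maximal deficiency `#S - #N(S)`, where `N` only sees the edges at
colour-`0` vertices, `Sᶜ ∪ N(S)` is a cover, and Hall's theorem with that deficiency gives a
matching of the same size. -/
theorem exists_isVertexCover_card_le_nu {H : SimpleGraph V} (hH : H.Colorable 2) :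
    ∃ C : Finset V, H.IsVertexCover C ∧ #C ≤ nu H := by
  obtain ⟨col⟩ := hH
  let t : V → Finset V := fun v => if col v = 0 then H.neighborFinset v else ∅
  obtain ⟨S, -, hS⟩ := exists_max_image univ
    (fun s : Finset V => (#s : ℤ) - #(s.biUnion t)) univ_nonempty
  have hS0 : #(S.biUnion t) ≤ #S := by simpa using hS ∅ (mem_univ _)
  obtain ⟨P, hPcard, hPt, hfst, hsnd⟩ :=
    exists_partialMatching_of_card_le_card_biUnion_add t (#S - #(S.biUnion t)) fun s => by
      have := hS s (mem_univ _); omega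
  have hPadj (p) (hp : p ∈ P) : H.Adj p.1 p.2 ∧ col p.1 = 0 := by
    have h := hPt p hp
    by_cases h0 : col p.1 = 0
    · simp only [t, h0, if_true, SimpleGraph.mem_neighborFinset] at h
      exact ⟨h, h0⟩
    · simp [t, h0] at h
  have hcover (u v : V) (huv : H.Adj u v) (hu : col u = 0) :
      u ∈ univ \ S ∪ S.biUnion t ∨ v ∈ univ \ S ∪ S.biUnion t := by
    by_cases huS : u ∈ S
    · exact Or.inr (mem_union_right _ (mem_biUnion.2 ⟨u, huS, by simp [t, hu, huv]⟩))
    · exact Or.inl (mem_union_left _ (by simp [huS]))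
  refine ⟨univ \ S ∪ S.biUnion t, fun u v huv => ?_, ?_⟩
  · by_cases hu : col u = 0
    · exact hcover u v huv hu
    · have hv : col v = 0 := by have := col.valid huv; omega
      exact (hcover v u huv.symm hv).symm
  · have hP : #P ≤ nu H := card_le_nu_of_injOn (fun p hp => (hPadj p hp).1) hfst hsnd
      fun p hp q hq h => col.valid (hPadj q hq).1 (by rw [← h, (hPadj p hp).2, (hPadj q hq).2])
    have h := card_union_le (univ \ S) (S.biUnion t)
    rw [card_univ_sdiff] at h
    have hSV : #S ≤ Fintype.card V := card_le_univ S
    omega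

end Matching

section Charging

variable [Fintype V] {H : SimpleGraph V} {C : Finset V}

lemma deg_eq_card_neighborFinset (H : SimpleGraph V) (v : V) :
    deg H v = #(H.neighborFinset v) := by
  rw [deg, SimpleGraph.neighborFinset, Set.ncard_eq_toFinset_card']

lemma deg_pos_of_adj {u v : V} (h : H.Adj u v) : 0 < deg H u := by
  rw [deg_eq_card_neighborFinset, card_pos]
  exact ⟨v, (H.mem_neighborFinset u v).2 h⟩

lemma SimpleGraph.IsVertexCover.exists_subset_deg_ne_zero (hC : H.IsVertexCover C) :
    ∃ C' ⊆ C, H.IsVertexCover C' ∧ ∀ c ∈ C', deg H c ≠ 0 :=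
  ⟨C.filter (deg H · ≠ 0), filter_subset _ C, fun u v huv => by
    simpa [(deg_pos_of_adj huv).ne', (deg_pos_of_adj huv.symm).ne'] using hC huv,
    fun c hc => (mem_filter.1 hc).2⟩

lemma sum_sum_neighborFinset_comm (C : Finset V) (g : V → V → ℝ) :
    ∑ c ∈ C, ∑ v ∈ H.neighborFinset c, g c v =
      ∑ v, ∑ c ∈ (H.neighborFinset v).filter (· ∈ C), g c v :=
  sum_comm' fun c v => by simp [H.adj_comm, and_comm]

lemma SimpleGraph.IsVertexCover.filter_neighborFinset (hC : H.IsVertexCover C) {v : V}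
    (hv : v ∉ C) : (H.neighborFinset v).filter (· ∈ C) = H.neighborFinset v :=
  filter_true_of_mem fun c hc => (hC ((H.mem_neighborFinset v c).1 hc)).resolve_left hv

/-- Each cover vertex `c` spreads one unit evenly over its edges, and each vertex `v` takes back
`φ v / deg v` from each of its edges; those all end in `C` when `v ∉ C`. -/
lemma sum_sum_inv_deg_sub_eq (hC : H.IsVertexCover C) (hCdeg : ∀ c ∈ C, deg H c ≠ 0)
    {φ : V → ℝ} (hφC : ∀ c ∈ C, φ c = 0) (hφ0 : ∀ v, deg H v = 0 → φ v = 0) :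
    ∑ c ∈ C, ∑ v ∈ H.neighborFinset c, ((deg H c : ℝ)⁻¹ - φ v / deg H v) = #C - ∑ v, φ v := by
  have hspread : ∀ c ∈ C, ∑ _v ∈ H.neighborFinset c, (deg H c : ℝ)⁻¹ = 1 := fun c hc => by
    rw [sum_const, nsmul_eq_mul, ← deg_eq_card_neighborFinset,
      mul_inv_cancel₀ (Nat.cast_ne_zero.2 (hCdeg c hc))]
  have htake (v : V) :
      ∑ c ∈ (H.neighborFinset v).filter (· ∈ C), φ v / deg H v = φ v := by
    by_cases hv : v ∈ C
    · simp [hφC v hv]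
    by_cases h0 : deg H v = 0
    · simp [hφ0 v h0]
    rw [hC.filter_neighborFinset hv, sum_const, nsmul_eq_mul, ← deg_eq_card_neighborFinset,
      mul_div_cancel₀ _ (Nat.cast_ne_zero.2 h0)]
  simp only [sum_sub_distrib]
  rw [sum_congr rfl hspread, sum_const, nsmul_one, sum_sum_neighborFinset_comm C,
    sum_congr rfl fun v _ => htake v]

lemma mul_card_le_of_forall_div_le (hC : H.IsVertexCover C) (hCdeg : ∀ c ∈ C, deg H c ≠ 0)
    {φ : V → ℝ} (hφC : ∀ c ∈ C, φ c = 0) (hφ0 : ∀ v, deg H v = 0 → φ v = 0)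
    (hφ : ∀ c ∈ C, ∀ v ∈ H.neighborFinset c, φ v / deg H v ≤ (deg H c : ℝ)⁻¹)
    {B : Finset V} (hBC : B ⊆ C) {θ : ℝ}
    (hθ : ∀ c ∈ B, ∀ v ∈ H.neighborFinset c, φ v / deg H v ≤ (1 - θ) * (deg H c : ℝ)⁻¹) :
    θ * #B ≤ #C - ∑ v, φ v := by
  rw [← sum_sum_inv_deg_sub_eq hC hCdeg hφC hφ0]
  calc θ * #B = ∑ c ∈ B, ∑ _v ∈ H.neighborFinset c, θ * (deg H c : ℝ)⁻¹ := by
        rw [mul_comm, ← nsmul_eq_mul, ← sum_const]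
        refine sum_congr rfl fun c hc => ?_
        rw [sum_const, nsmul_eq_mul, ← deg_eq_card_neighborFinset, mul_left_comm,
          mul_inv_cancel₀ (Nat.cast_ne_zero.2 (hCdeg c (hBC hc))), mul_one]
    _ ≤ ∑ c ∈ B, ∑ v ∈ H.neighborFinset c, ((deg H c : ℝ)⁻¹ - φ v / deg H v) :=
        sum_le_sum fun c hc => sum_le_sum fun v hv => by linarith [hθ c hc v hv]
    _ ≤ _ := sum_le_sum_of_subset_of_nonneg hBC fun c hc _ =>
        sum_nonneg fun v hv => sub_nonneg.2 (hφ c hc v hv)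

lemma mul_card_le_of_le_sum_inv_deg (hC : H.IsVertexCover C) (hCdeg : ∀ c ∈ C, deg H c ≠ 0)
    {φ : V → ℝ} (hφC : ∀ c ∈ C, φ c = 0) (hφ0 : ∀ v, deg H v = 0 → φ v = 0)
    (hφ : ∀ c ∈ C, ∀ v ∈ H.neighborFinset c, φ v / deg H v ≤ (deg H c : ℝ)⁻¹)
    {W : Finset V} (hWC : ∀ w ∈ W, w ∉ C) (hWφ : ∀ w ∈ W, φ w = 0) {θ : ℝ}
    (hθ : ∀ w ∈ W, θ ≤ ∑ c ∈ H.neighborFinset w, (deg H c : ℝ)⁻¹) :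
    θ * #W ≤ #C - ∑ v, φ v := by
  rw [← sum_sum_inv_deg_sub_eq hC hCdeg hφC hφ0]
  calc θ * #W ≤ ∑ w ∈ W, ∑ c ∈ H.neighborFinset w, (deg H c : ℝ)⁻¹ := by
        rw [mul_comm, ← nsmul_eq_mul, ← sum_const]; exact sum_le_sum hθ
    _ = ∑ c ∈ C, ∑ v ∈ H.neighborFinset c, if v ∈ W then (deg H c : ℝ)⁻¹ else 0 := by
        rw [sum_sum_neighborFinset_comm C]
        simp only [sum_ite_irrel, sum_const_zero, sum_ite_mem, univ_inter]
        exact sum_congr rfl fun w hw => by rw [hC.filter_neighborFinset (hWC w hw)]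
    _ ≤ _ := sum_le_sum fun c hc => sum_le_sum fun v hv => by
        split_ifs with hvW
        · simp [hWφ v hvW]
        · exact sub_nonneg.2 (hφ c hc v hv)

end Charging

section Counting

variable {M : Finset (Sym2 V)} {C : Finset V}

def numEndsIn (C : Finset V) (e : Sym2 V) : ℕ := #(C.filter (· ∈ e))

lemma numEndsIn_eq_zero {e : Sym2 V} : numEndsIn C e = 0 ↔ ∀ v ∈ e, v ∉ C := by
  simp only [numEndsIn, card_eq_zero, filter_eq_empty_iff]
  exact ⟨fun h v hv hvC => h hvC hv, fun h v hvC hv => h v hv hvC⟩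

lemma exists_of_numEndsIn_eq_one {e : Sym2 V} (he : ¬ e.IsDiag) (h : numEndsIn C e = 1) :
    ∃ c v, e = s(c, v) ∧ c ∈ C ∧ v ∉ C := by
  obtain ⟨c, hc⟩ := card_eq_one.1 h
  obtain ⟨hcC, hce⟩ := mem_filter.1 (hc ▸ mem_singleton_self c)
  obtain ⟨v, rfl⟩ := Sym2.mem_iff_exists.1 hce
  refine ⟨c, v, rfl, hcC, fun hvC => he ?_⟩
  have hv : v ∈ C.filter (· ∈ s(c, v)) := mem_filter.2 ⟨hvC, Sym2.mem_mk_right c v⟩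
  rw [hc, mem_singleton] at hv
  simp [hv]

lemma sum_numEndsIn_le (hM : (M : Set (Sym2 V)).Pairwise fun e f => ∀ v : V, v ∈ e → v ∉ f)
    (S : Finset V) : ∑ e ∈ M, numEndsIn S e ≤ #S := by
  simp only [numEndsIn]
  rw [← card_biUnion fun e he f hf hef =>
    disjoint_filter.2 fun v _ hve hvf => hM he hf hef v hve hvf]
  exact card_le_card (biUnion_subset.2 fun e _ => filter_subset _ _)

lemma card_filter_numEndsIn_pos_le
    (hM : (M : Set (Sym2 V)).Pairwise fun e f => ∀ v : V, v ∈ e → v ∉ f) (S : Finset V) :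
    #(M.filter (0 < numEndsIn S ·)) ≤ #S :=
  calc #(M.filter (0 < numEndsIn S ·)) ≤ ∑ e ∈ M, numEndsIn S e := by
        rw [card_filter]; exact sum_le_sum fun e _ => by split_ifs <;> omega
    _ ≤ #S := sum_numEndsIn_le hM S

lemma two_mul_card_le (hM : (M : Set (Sym2 V)).Pairwise fun e f => ∀ v : V, v ∈ e → v ∉ f)
    (C : Finset V) :
    2 * #M ≤ 2 * #(M.filter (numEndsIn C · = 0)) + #(M.filter (numEndsIn C · = 1)) + #C :=
  calc 2 * #M ≤ ∑ e ∈ M, (2 * (if numEndsIn C e = 0 then 1 else 0) +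
        (if numEndsIn C e = 1 then 1 else 0) + numEndsIn C e) := by
        rw [card_eq_sum_ones, mul_sum]; exact sum_le_sum fun e _ => by split_ifs <;> omega
    _ ≤ _ := by
        rw [sum_add_distrib, sum_add_distrib, ← mul_sum, card_filter, card_filter]
        gcongr
        exact sum_numEndsIn_le hM C

lemma card_filter_numEndsIn_eq_zero_add_eq_one_le (C : Finset V) :
    #(M.filter (numEndsIn C · = 0)) + #(M.filter (numEndsIn C · = 1)) ≤ #M := by
  rw [card_filter, card_filter, ← sum_add_distrib, card_eq_sum_ones]
  exact sum_le_sum fun e _ => by split_ifs <;> omega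

end Counting

section EDCS

variable [Fintype V] {G H : SimpleGraph V} {β ε : ℝ} {C : Finset V} {M : Finset (Sym2 V)}

lemma IsEDCS.deg_lt {βm : ℝ} (hE : IsEDCS G H β βm) (hβ : 0 < β) (v : V) : (deg H v : ℝ) < β := by
  by_cases h0 : deg H v = 0
  · simpa [h0] using hβ
  obtain ⟨u, hu⟩ := card_pos.1 (pos_iff_ne_zero.2 (deg_eq_card_neighborFinset H v ▸ h0))
  have hvu := (H.mem_neighborFinset v u).1 hu
  have h1 : (1 : ℝ) ≤ deg H u := by exact_mod_cast deg_pos_of_adj hvu.symm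
  linarith [hE.2.1 v u hvu]

lemma IsEDCS.minLoad_le_sum_inv_deg {βm : ℝ} (hE : IsEDCS G H β βm) (v : V) :
    minLoad β (deg H v) ≤ ∑ c ∈ H.neighborFinset v, (deg H c : ℝ)⁻¹ :=
  calc minLoad β (deg H v) = ∑ _c ∈ H.neighborFinset v, (β - deg H v)⁻¹ := by
        rw [sum_const, nsmul_eq_mul, ← deg_eq_card_neighborFinset, minLoad, div_eq_mul_inv]
    _ ≤ _ := sum_le_sum fun c hc => by
        have hvc := (H.mem_neighborFinset v c).1 hc
        have h1 : (0 : ℝ) < deg H c := Nat.cast_pos.2 (deg_pos_of_adj hvc.symm)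
        exact inv_anti₀ h1 (by linarith [hE.2.1 v c hvc])

def bareVerts (C : Finset V) (M : Finset (Sym2 V)) : Finset V :=
  univ.filter fun v => ∃ e ∈ M, numEndsIn C e = 0 ∧ v ∈ e

def bareDemand (H : SimpleGraph V) (β ε : ℝ) (C : Finset V) (M : Finset (Sym2 V)) (v : V) : ℝ :=
  if v ∈ bareVerts C M then bareShare β ε (deg H v) else 0

lemma notMem_of_mem_bareVerts {v : V} (hv : v ∈ bareVerts C M) : v ∉ C := by
  obtain ⟨e, -, he0, hve⟩ := (mem_filter.1 hv).2
  exact numEndsIn_eq_zero.1 he0 v hve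

lemma bareDemand_eq_zero_of_mem (c : V) (hc : c ∈ C) : bareDemand H β ε C M c = 0 :=
  if_neg fun h => notMem_of_mem_bareVerts h hc

lemma bareDemand_eq_zero_of_deg_eq_zero (hε0 : 0 < ε) (hε : ε < 1 / 120) (hβ : 0 < β) (v : V)
    (hv : deg H v = 0) : bareDemand H β ε C M v = 0 := by
  simp [bareDemand, hv, bareShare_zero hε0 hε hβ]

lemma bareDemand_div_le (hε0 : 0 < ε) (hε : ε < 1 / 120) (hβ : 0 < β) {βm : ℝ}
    (hE : IsEDCS G H β βm) {c v : V} (hcv : H.Adj c v) :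
    bareDemand H β ε C M v / deg H v ≤ (deg H c : ℝ)⁻¹ := by
  have hc : (0 : ℝ) < deg H c := Nat.cast_pos.2 (deg_pos_of_adj hcv)
  have hv : (0 : ℝ) < deg H v := Nat.cast_pos.2 (deg_pos_of_adj hcv.symm)
  unfold bareDemand
  split_ifs
  · exact bareShare_div_le hε0 hε hβ hc hv (hE.2.1 c v hcv)
  · rw [zero_div]; positivity

lemma bareDemand_div_le_of_not_mid (hε0 : 0 < ε) (hε : ε < 1 / 120) (hβ : 0 < β) {βm : ℝ}
    (hE : IsEDCS G H β βm) {c v : V} (hcv : H.Adj c v)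
    (hc : (deg H c : ℝ) < 2 / 5 * β ∨ 3 / 5 * β < deg H c) :
    bareDemand H β ε C M v / deg H v ≤ (1 - 1 / 80) * (deg H c : ℝ)⁻¹ := by
  have hc0 : (0 : ℝ) < deg H c := Nat.cast_pos.2 (deg_pos_of_adj hcv)
  have hv : (0 : ℝ) < deg H v := Nat.cast_pos.2 (deg_pos_of_adj hcv.symm)
  unfold bareDemand
  split_ifs
  · rw [show (1 : ℝ) - 1 / 80 = 79 / 80 by norm_num]
    exact bareShare_div_le_of_not_mid hε0 hε hβ hc0 hc hv (hE.2.1 c v hcv)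
  · rw [zero_div]; positivity

lemma sum_bareDemand_ge (hβ : 0 < β)
    (hE : IsEDCS G H β ((1 - ε) * β)) (hC : H.IsVertexCover C) (hM : IsMatchingSet G M) :
    (2 - 4 * ε) * #(M.filter (numEndsIn C · = 0)) ≤ ∑ v, bareDemand H β ε C M v := by
  have hX :
      bareVerts C M = (M.filter (numEndsIn C · = 0)).biUnion fun e => univ.filter (· ∈ e) := by
    ext v; simp [bareVerts, and_assoc]
  have hdisj : ((M.filter (numEndsIn C · = 0) : Finset (Sym2 V)) : Set (Sym2 V)).PairwiseDisjoint
      fun e => univ.filter (· ∈ e) := fun e he f hf hef =>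
    disjoint_filter.2 fun v _ hve hvf => hM.2 (mem_filter.1 he).1 (mem_filter.1 hf).1 hef v hve hvf
  simp only [bareDemand]
  rw [sum_ite_mem, univ_inter, hX, sum_biUnion hdisj, mul_comm, ← nsmul_eq_mul, ← sum_const]
  refine sum_le_sum fun e he => ?_
  obtain ⟨heM, he0⟩ := mem_filter.1 he
  induction e using Sym2.ind with
  | h u v =>
    have huv : G.Adj u v := hM.1 heM
    have hnH : ¬ H.Adj u v := fun h => by
      rcases hC h with h' | h' <;> exact numEndsIn_eq_zero.1 he0 _ (by simp) h'
    rw [show univ.filter (· ∈ s(u, v)) = {u, v} by ext; simp, sum_pair huv.ne]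
    exact two_sub_four_mul_le_bareShare_add (Nat.cast_nonneg _) (hE.deg_lt hβ u)
      (Nat.cast_nonneg _) (hE.deg_lt hβ v) (hE.2.2 u v huv hnH)

def offMidCover (H : SimpleGraph V) (β : ℝ) (C : Finset V) : Finset V :=
  C.filter fun c => (deg H c : ℝ) < 2 / 5 * β ∨ 3 / 5 * β < deg H c

def heavyUncovered (H : SimpleGraph V) (β : ℝ) (C : Finset V) (M : Finset (Sym2 V)) : Finset V :=
  univ.filter fun v => v ∉ C ∧ v ∉ bareVerts C M ∧ β / 5 < deg H v

lemma card_offMidCover_le (hε0 : 0 < ε) (hε : ε < 1 / 120) (hβ : 0 < β)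
    (hE : IsEDCS G H β ((1 - ε) * β)) (hC : H.IsVertexCover C) (hCdeg : ∀ c ∈ C, deg H c ≠ 0)
    (hM : IsMatchingSet G M) :
    1 / 80 * #(offMidCover H β C) ≤ #C - (2 - 4 * ε) * #(M.filter (numEndsIn C · = 0)) := by
  have := mul_card_le_of_forall_div_le (φ := bareDemand H β ε C M) hC hCdeg
    bareDemand_eq_zero_of_mem
    (bareDemand_eq_zero_of_deg_eq_zero hε0 hε hβ)
    (fun c _ v hv => bareDemand_div_le hε0 hε hβ hE ((H.mem_neighborFinset c v).1 hv))
    (B := offMidCover H β C) (filter_subset _ C) (θ := 1 / 80)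
    (fun c hc v hv => bareDemand_div_le_of_not_mid hε0 hε hβ hE ((H.mem_neighborFinset c v).1 hv)
      (mem_filter.1 hc).2)
  linarith [sum_bareDemand_ge hβ hE hC hM]

lemma card_heavyUncovered_le (hε0 : 0 < ε) (hε : ε < 1 / 120) (hβ : 0 < β)
    (hE : IsEDCS G H β ((1 - ε) * β)) (hC : H.IsVertexCover C) (hCdeg : ∀ c ∈ C, deg H c ≠ 0)
    (hM : IsMatchingSet G M) :
    1 / 4 * #(heavyUncovered H β C M) ≤ #C - (2 - 4 * ε) * #(M.filter (numEndsIn C · = 0)) := by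
  have := mul_card_le_of_le_sum_inv_deg (φ := bareDemand H β ε C M) hC hCdeg
    bareDemand_eq_zero_of_mem
    (bareDemand_eq_zero_of_deg_eq_zero hε0 hε hβ)
    (fun c _ v hv => bareDemand_div_le hε0 hε hβ hE ((H.mem_neighborFinset c v).1 hv))
    (W := heavyUncovered H β C M) (fun w hw => (mem_filter.1 hw).2.1)
    (fun w hw => if_neg (mem_filter.1 hw).2.2.1) (θ := 1 / 4)
    (fun w hw => (quarter_le_minLoad (mem_filter.1 hw).2.2.2.le (hE.deg_lt hβ w)).trans
      (hE.minLoad_le_sum_inv_deg w))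
  linarith [sum_bareDemand_ge hβ hE hC hM]

lemma card_filter_numEndsIn_eq_one_le (hε : ε < 1 / 120) (hβ : 0 < β)
    (hE : IsEDCS G H β ((1 - ε) * β)) (hM : IsMatchingSet G M) {Vlow Vmid : Set V}
    (hmid : ∀ v, 2 / 5 * β ≤ (deg H v : ℝ) → (deg H v : ℝ) ≤ 3 / 5 * β → v ∈ Vmid)
    (hlow : ∀ v, (deg H v : ℝ) ≤ β / 5 → v ∈ Vlow) :
    #(M.filter (numEndsIn C · = 1)) ≤ #(M.filter (· ∈ (between H Vlow Vmid).edgeSet)) +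
      #(offMidCover H β C) + #(heavyUncovered H β C M) := by
  have hsub : M.filter (numEndsIn C · = 1) ⊆ M.filter (· ∈ (between H Vlow Vmid).edgeSet) ∪
      M.filter (0 < numEndsIn (offMidCover H β C) ·) ∪
      M.filter (0 < numEndsIn (heavyUncovered H β C M) ·) := by
    intro e he
    obtain ⟨heM, he1⟩ := mem_filter.1 he
    obtain ⟨c, v, rfl, hcC, hvC⟩ :=
      exists_of_numEndsIn_eq_one (G.not_isDiag_of_mem_edgeSet (hM.1 heM)) he1
    have hmeets {S : Finset V} {x : V} (hx : x ∈ S) (hxe : x ∈ s(c, v)) :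
        s(c, v) ∈ M.filter (0 < numEndsIn S ·) :=
      mem_filter.2 ⟨heM, card_pos.2 ⟨x, mem_filter.2 ⟨hx, hxe⟩⟩⟩
    by_cases hc : (deg H c : ℝ) < 2 / 5 * β ∨ 3 / 5 * β < deg H c
    · exact mem_union_left _
        (mem_union_right _ (hmeets (mem_filter.2 ⟨hcC, hc⟩) (Sym2.mem_mk_left c v)))
    rw [not_or, not_lt, not_lt] at hc
    by_cases hv : β / 5 < deg H v
    · have hvX : v ∉ bareVerts C M := fun hvX => by
        obtain ⟨f, hfM, hf0, hvf⟩ := (mem_filter.1 hvX).2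
        exact hM.2 heM hfM (by rintro rfl; omega) v (Sym2.mem_mk_right c v) hvf
      exact mem_union_right _
        (hmeets (mem_filter.2 ⟨mem_univ _, hvC, hvX, hv⟩) (Sym2.mem_mk_right c v))
    rw [not_lt] at hv
    have hH : H.Adj c v := by
      by_contra hH
      have := hE.2.2 c v (hM.1 heM) hH
      nlinarith
    exact mem_union_left _ (mem_union_left _
      (mem_filter.2 ⟨heM, ⟨hH, Or.inr ⟨hmid c hc.1 hc.2, hlow v hv⟩⟩⟩))
  calc _ ≤ _ := card_le_card hsub
    _ ≤ _ := card_union_le _ _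
    _ ≤ _ := add_le_add (card_union_le _ _) le_rfl
    _ ≤ _ := by gcongr <;> exact card_filter_numEndsIn_pos_le hM.2 _

end EDCS

lemma le_of_card_bounds {ε δ m b o c bad w g : ℝ} (hε0 : 0 < ε) (hεδ : 2 * ε < δ)
    (hδ : δ < 1 / 60) (hb : 0 ≤ b) (ho : 0 ≤ o) (hbad : 0 ≤ bad)
    (hc : c ≤ (2 / 3 + δ) * m) (hm : 2 * m ≤ 2 * b + o + c) (hbo : b + o ≤ m)
    (hbadD : 1 / 80 * bad ≤ c - (2 - 4 * ε) * b) (hwD : 1 / 4 * w ≤ c - (2 - 4 * ε) * b)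
    (hg : o ≤ g + bad + w) : (2 / 3 - 120 * √δ) * m ≤ g := by
  have hεb : 4 * ε * b ≤ 2 * δ * b := by nlinarith
  have hbm : δ * b ≤ δ * m := mul_le_mul_of_nonneg_left (by linarith) (by linarith)
  have hD : c - (2 - 4 * ε) * b ≤ 5 * δ * m := by nlinarith
  have hgood : (2 / 3 - 424 * δ) * m ≤ g := by nlinarith
  have hsq : √δ ^ 2 = δ := Real.sq_sqrt (by linarith)
  have hsqrt : √δ ≤ 1 / 7 := by
    rw [Real.sqrt_le_left (by norm_num)]; linarith
  have : 424 * δ ≤ 120 * √δ := by nlinarith [Real.sqrt_nonneg δ]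
  nlinarith

theorem EDCS_tight_P1_general [Fintype V] (G H : SimpleGraph V) (ε δ β : ℝ)
    (hε0 : 0 < ε) (hε : ε < 1 / 120) (hδl : 2 * ε < δ) (hδu : δ < 1 / 60)
    (hbip : G.Colorable 2)
    (hβ1 : 1 ≤ (1 - ε) * β)
    (hEDCS : IsEDCS G H β ((1 - ε) * β))
    (Vmid Vlow : Set V)
    (hVmid : Vmid = {v | 0.4 * β ≤ (deg H v : ℝ) ∧ (deg H v : ℝ) ≤ 0.6 * β})
    (hVlow : Vlow = {v | 0 ≤ (deg H v : ℝ) ∧ (deg H v : ℝ) ≤ 0.2 * β})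
    (H' : SimpleGraph V) (hH' : H' = between H Vlow Vmid)
    (hmu : (nu H : ℝ) ≤ (2 / 3 + δ) * nu G) :
    (2 / 3 - 120 * Real.sqrt δ) * nu G ≤ (nu H' : ℝ) := by
  have hβ : 0 < β := by nlinarith
  obtain ⟨M, hM, hMnu⟩ := exists_isMatchingSet_card_eq_nu G
  obtain ⟨C₀, hC₀, hC₀nu⟩ := exists_isVertexCover_card_le_nu (hbip.mono_left hEDCS.1)
  obtain ⟨C, hCC₀, hC, hCdeg⟩ := hC₀.exists_subset_deg_ne_zero
  have hCnu : (#C : ℝ) ≤ (2 / 3 + δ) * #M := by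
    rw [hMnu]; exact le_trans (by exact_mod_cast (card_le_card hCC₀).trans hC₀nu) hmu
  have hmid (v : V) (h1 : 2 / 5 * β ≤ (deg H v : ℝ)) (h2 : (deg H v : ℝ) ≤ 3 / 5 * β) :
      v ∈ Vmid := by
    rw [hVmid]; norm_num; exact ⟨by linarith, by linarith⟩
  have hlow (v : V) (h : (deg H v : ℝ) ≤ β / 5) : v ∈ Vlow := by
    rw [hVlow]; norm_num; linarith
  have hH'nu := card_filter_mem_edgeSet_le_nu hM H'
  subst hH'
  rw [← hMnu]
  refine le_of_card_bounds hε0 hδl hδu (Nat.cast_nonneg _) (Nat.cast_nonneg _)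
    (Nat.cast_nonneg _) hCnu (by exact_mod_cast two_mul_card_le hM.2 C)
    (by exact_mod_cast card_filter_numEndsIn_eq_zero_add_eq_one_le C)
    (card_offMidCover_le hε0 hε hβ hEDCS hC hCdeg hM)
    (card_heavyUncovered_le hε0 hε hβ hEDCS hC hCdeg hM) ?_
  have := card_filter_numEndsIn_eq_one_le hε hβ hEDCS hM hmid hlow (C := C)
  exact_mod_cast this.trans (by omega)

/-- Property (P1) of the characterization of tight EDCS instances (bipartite graphs):
if `μ(H) ≤ (2/3 + δ)·μ(G)`, then `μ(H') ≥ (2/3 − 120√δ)·μ(G)`. -/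
theorem EDCS_tight_P1 [Fintype V] (G H : SimpleGraph V) (ε δ β : ℝ)
    (hε0 : 0 < ε) (hε : ε < 1 / 120) (hδl : 2 * ε < δ) (hδu : δ < 1 / 60)
    (hbip : G.Colorable 2)
    (hβ1 : 1 ≤ (1 - ε) * β) (hβ2 : (1 - ε) * β < β)
    (hEDCS : IsEDCS G H β ((1 - ε) * β))
    (Vmid Vlow : Set V)
    (hVmid : Vmid = {v | 0.4 * β ≤ (deg H v : ℝ) ∧ (deg H v : ℝ) ≤ 0.6 * β})
    (hVlow : Vlow = {v | 0 ≤ (deg H v : ℝ) ∧ (deg H v : ℝ) ≤ 0.2 * β})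
    (H' : SimpleGraph V) (hH' : H' = between H Vlow Vmid)
    (hmu : (nu H : ℝ) ≤ (2 / 3 + δ) * nu G) :
    (2 / 3 - 120 * Real.sqrt δ) * nu G ≤ (nu H' : ℝ) :=
  EDCS_tight_P1_general G H ε δ β hε0 hε hδl hδu hbip hβ1 hEDCS Vmid Vlow hVmid hVlow H' hH' hmu
end
end

section
/- In the Hall-witness setup for a subgraph H of a bipartite graph G, the set S satisfies |S| ≥ 2·(μ(G) − μ(H)). -/
open scoped Classical

noncomputable section

variable {V : Type*}

/-!
Every edge of `M*` outside `M̄` has an endpoint in `T = Ā ∪ B`: an `A`-endpoint forces the other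
endpoint into `R`, hence into `B` unless the edge lies in `M̄`. Since the edges of `M*` are disjoint,
`|M* \ M̄| ≤ |T| ≤ (n - |A|) + |B| = μ(H)`, so `|M̄| ≥ μ(G) - μ(H)`, and `S = V(M̄)` has `2|M̄|`
elements.
-/

lemma IsMatchingSet.subset {G : SimpleGraph V} {M N : Set (Sym2 V)} (hM : IsMatchingSet G M)
    (hNM : N ⊆ M) : IsMatchingSet G N :=
  ⟨hNM.trans hM.1, hM.2.mono hNM⟩

lemma IsMatchingSet.ncard_mVerts [Finite V] {G : SimpleGraph V} {M : Set (Sym2 V)}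
    (hM : IsMatchingSet G M) : (mVerts M).ncard = 2 * M.ncard := by
  have hU : mVerts M = ⋃ e ∈ M, (e.toFinset : Set V) := by
    ext v; simp [mVerts, Sym2.mem_toFinset]
  have hdisj : M.PairwiseDisjoint fun e : Sym2 V => (e.toFinset : Set V) :=
    fun e he f hf hef => Set.disjoint_left.2 fun v hve hvf =>
      hM.2 he hf hef v (by simpa using hve) (by simpa using hvf)
  rw [hU, (Set.toFinite M).ncard_biUnion (fun _ _ => Set.toFinite _) hdisj,
    finsum_mem_congr rfl fun e he => by
      rw [Set.ncard_coe_finset, Sym2.card_toFinset_of_not_isDiag e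
        (G.not_isDiag_of_mem_edgeSet (hM.1 he))],
    finsum_mem_eq_finite_toFinset_sum _ (Set.toFinite M), Finset.sum_const, smul_eq_mul,
    Set.ncard_eq_toFinset_card M, mul_comm]

lemma IsMatchingSet.ncard_le_of_forall_exists_mem [Finite V] {G : SimpleGraph V}
    {M : Set (Sym2 V)} (hM : IsMatchingSet G M) {T : Set V} (hT : ∀ e ∈ M, ∃ v ∈ T, v ∈ e) :
    M.ncard ≤ T.ncard := by
  rcases M.eq_empty_or_nonempty with rfl | ⟨e₀, he₀⟩
  · simp
  have : Nonempty V := let ⟨v, _⟩ := hT e₀ he₀; ⟨v⟩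
  choose! f hfT hfe using hT
  refine Set.ncard_le_ncard_of_injOn f hfT (fun e he e' he' hee' => ?_) (Set.toFinite T)
  by_contra hne
  exact hM.2 he he' hne (f e) (hfe e he) (hee' ▸ hfe e' he')

lemma exists_mem_of_notMem_crossE {G : SimpleGraph V} {L R A B : Set V}
    (hbip : ∀ u v, G.Adj u v → (u ∈ L ∧ v ∈ R) ∨ (u ∈ R ∧ v ∈ L))
    {M : Set (Sym2 V)} {e : Sym2 V} (heG : e ∈ G.edgeSet) (heM : e ∈ M)
    (he : e ∉ crossE M A (R \ B)) : ∃ w ∈ (L \ A) ∪ B, w ∈ e := by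
  have key : ∀ u v, u ∈ L → v ∈ R → s(u, v) = e → ∃ w ∈ (L \ A) ∪ B, w ∈ e := by
    rintro u v huL hvR rfl
    by_cases huA : u ∈ A
    · by_cases hvB : v ∈ B
      · exact ⟨v, Or.inr hvB, Sym2.mem_mk_right u v⟩
      · exact absurd ⟨heM, u, v, rfl, huA, hvR, hvB⟩ he
    · exact ⟨u, Or.inl ⟨huL, huA⟩, Sym2.mem_mk_left u v⟩
  induction e using Sym2.ind with
  | _ u v =>
    rcases hbip u v heG with ⟨huL, hvR⟩ | ⟨huR, hvL⟩
    · exact key u v huL hvR rfl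
    · exact key v u hvL huR Sym2.eq_swap

theorem hall_witness_S_lower_bound_general [Fintype V]
(G H : SimpleGraph V) (L R : Set V) (n : ℕ)
    (hbipE : ∀ u v, G.Adj u v → (u ∈ L ∧ v ∈ R) ∨ (u ∈ R ∧ v ∈ L))
    (hLcard : L.ncard = n)
    (A : Set V) (hAL : A ⊆ L)
    (hwit : A.ncard + nu H = n + (nbhd H A).ncard)
    (Mstar : Set (Sym2 V)) (hMstar : IsMatchingSet G Mstar) (hMstarMax : Mstar.ncard = nu G)
    (Mbar : Set (Sym2 V)) (hMbar : Mbar = crossE Mstar A (R \ nbhd H A))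
    (S : Set V) (hS : S = mVerts Mbar) :
    2 * ((nu G : ℤ) - (nu H : ℤ)) ≤ (S.ncard : ℤ) := by
  have hMbar_sub : Mbar ⊆ Mstar := hMbar ▸ fun _ he => he.1
  have hS_card : S.ncard = 2 * Mbar.ncard := hS ▸ (hMstar.subset hMbar_sub).ncard_mVerts
  have hrest : (Mstar \ Mbar).ncard ≤ ((L \ A) ∪ nbhd H A).ncard :=
    (hMstar.subset Set.sdiff_subset).ncard_le_of_forall_exists_mem fun e he =>
      exists_mem_of_notMem_crossE hbipE (hMstar.1 he.1) he.1 (hMbar ▸ he.2)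
  have hcover : ((L \ A) ∪ nbhd H A).ncard ≤ (L \ A).ncard + (nbhd H A).ncard :=
    Set.ncard_union_le _ _
  have hLA : (L \ A).ncard + A.ncard = n := hLcard ▸ Set.ncard_sdiff_add_ncard_of_subset hAL
  have hsplit : (Mstar \ Mbar).ncard + Mbar.ncard = Mstar.ncard :=
    Set.ncard_sdiff_add_ncard_of_subset hMbar_sub
  omega

/-- In the Hall-witness setup, `|S| ≥ 2(μ(G) − μ(H))`. -/
theorem hall_witness_S_lower_bound [Fintype V]
(G H : SimpleGraph V) (L R : Set V) (n : ℕ)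
    (hbipE : ∀ u v, G.Adj u v → (u ∈ L ∧ v ∈ R) ∨ (u ∈ R ∧ v ∈ L))
    (hdisj : Disjoint L R) (hcover : L ∪ R = Set.univ)
    (hLcard : L.ncard = n) (hRcard : R.ncard = n)
    (hHG : H ≤ G)
    (A : Set V) (hAL : A ⊆ L)
    (hwit : A.ncard + nu H = n + (nbhd H A).ncard)
    (Mstar : Set (Sym2 V)) (hMstar : IsMatchingSet G Mstar) (hMstarMax : Mstar.ncard = nu G)
    (Mbar : Set (Sym2 V)) (hMbar : Mbar = crossE Mstar A (R \ nbhd H A))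
    (S : Set V) (hS : S = mVerts Mbar) :
    2 * ((nu G : ℤ) - (nu H : ℤ)) ≤ (S.ncard : ℤ) :=
  hall_witness_S_lower_bound_general G H L R n hbipE hLcard A hAL hwit Mstar hMstar hMstarMax Mbar
    hMbar S hS
end
end

section
/- Let G be a graph, let M be a matching of G, let M* be a maximum matching of G, and let L1 be the number of connected components of M ⊕ M* that consist of a single edge (length-one augmenting paths for M). Then G contains a collection of at least 2·μ(G) − 3·|M| − 2·L1 pairwise vertex-disjoint augmenting paths for M, each of length exactly three, i.e., each is a path (a, u, v, b) where (u,v) ∈ M, the edges (a,u) and (v,b) are edges of G, and a, b ∉ V(M) with a ≠ b. -/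
set_option maxHeartbeats 1000000


open scoped Classical

noncomputable section

variable {V : Type*}

def finOf {α : Type*} [Fintype α] (s : Set α) : Finset α := Finset.univ.filter (· ∈ s)

lemma mem_finOf {α : Type*} [Fintype α] {s : Set α} {a : α} : a ∈ finOf s ↔ a ∈ s := by
  simp [finOf]

lemma card_finOf {α : Type*} [Fintype α] (s : Set α) : (finOf s).card = s.ncard := by
  rw [← Set.ncard_coe_finset (finOf s)]; congr 1; ext a; simp [mem_finOf]

def evFin [Fintype V] (e : Sym2 V) : Finset V := Finset.univ.filter (· ∈ e)

lemma mem_evFin [Fintype V] {e : Sym2 V} {v : V} : v ∈ evFin e ↔ v ∈ e := by simp [evFin]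

lemma evFin_pair [Fintype V] (a b : V) : evFin (s(a,b)) = {a, b} := by
  ext v; simp [evFin, Sym2.mem_iff]

lemma card_evFin_le [Fintype V] (e : Sym2 V) : (evFin e).card ≤ 2 := by
  induction e using Sym2.ind with
  | _ a b =>
    rw [evFin_pair]
    exact (Finset.card_insert_le a {b}).trans (by simp)

lemma sym2_rep (e : Sym2 V) : ∃ a b : V, e = s(a,b) := by
  induction e using Sym2.ind with
  | _ a b => exact ⟨a, b, rfl⟩

def augK (M Mstar : Set (Sym2 V)) : Set (Sym2 V) :=
  {e | e ∈ M ∧ ∃ a u v b : V, e = s(u,v) ∧ s(a,u) ∈ Mstar ∧ s(v,b) ∈ Mstar ∧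
    a ∉ mVerts M ∧ b ∉ mVerts M}

lemma matching_disjoint {G : SimpleGraph V} {M : Set (Sym2 V)} (hM : IsMatchingSet G M)
    {e f : Sym2 V} (he : e ∈ M) (hf : f ∈ M) (hne : e ≠ f) {v : V} (hv : v ∈ e) : v ∉ f :=
  hM.2 he hf hne v hv

lemma exposed_partner [Fintype V] {G : SimpleGraph V} {M Mstar : Set (Sym2 V)}
    (hMstar : IsMatchingSet G Mstar) {e : Sym2 V} (heMs : e ∈ Mstar)
    {u : V} (hue : u ∈ e) (huS : u ∈ mVerts M)
    (hc : (evFin e ∩ finOf (mVerts M)).card = 1) :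
    ∃ a : V, s(a,u) ∈ Mstar ∧ a ∉ mVerts M := by
  have hnd : ¬ e.IsDiag := G.not_isDiag_of_mem_edgeSet (hMstar.1 heMs)
  obtain ⟨x, y, rfl⟩ := sym2_rep e
  have hxy : x ≠ y := by simpa [Sym2.isDiag_iff_proj_eq] using hnd
  have key : ∀ w : V, w ∈ s(x,y) → w ≠ u → w ∉ mVerts M := by
    intro w hw hwu hwS
    have hsub : ({u, w} : Finset V) ⊆ evFin s(x,y) ∩ finOf (mVerts M) := by
      intro v hv
      rcases Finset.mem_insert.1 hv with rfl | hv
      · exact Finset.mem_inter.2 ⟨mem_evFin.2 hue, mem_finOf.2 huS⟩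
      · rw [Finset.mem_singleton] at hv; subst hv
        exact Finset.mem_inter.2 ⟨mem_evFin.2 hw, mem_finOf.2 hwS⟩
    have h2 : ({u, w} : Finset V).card = 2 := by
      rw [Finset.card_insert_of_notMem (by simpa using (Ne.symm hwu)), Finset.card_singleton]
    have := Finset.card_le_card hsub
    omega
  rcases Sym2.mem_iff.1 hue with rfl | rfl
  · refine ⟨y, by rwa [Sym2.eq_swap], key y (by simp [Sym2.mem_iff]) (Ne.symm hxy)⟩
  · exact ⟨x, heMs, key x (by simp [Sym2.mem_iff]) hxy⟩

lemma counting [Fintype V] (G : SimpleGraph V) (M Mstar : Set (Sym2 V))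
    (hM : IsMatchingSet G M) (hMstar : IsMatchingSet G Mstar) :
    2 * Mstar.ncard ≤ (augK M Mstar).ncard + 3 * M.ncard +
      2 * {e ∈ (M \ Mstar) ∪ (Mstar \ M) |
        ∀ f ∈ (M \ Mstar) ∪ (Mstar \ M), f ≠ e → ∀ v : V, v ∈ e → v ∉ f}.ncard := by
  classical
  set D : Set (Sym2 V) := (M \ Mstar) ∪ (Mstar \ M) with hDdef
  set LS : Set (Sym2 V) := {e ∈ D | ∀ f ∈ D, f ≠ e → ∀ v : V, v ∈ e → v ∉ f} with hLSdef
  set S : Finset V := finOf (mVerts M) with hSdef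
  set fM : Finset (Sym2 V) := finOf M with hfMdef
  set fMs : Finset (Sym2 V) := finOf Mstar with hfMsdef
  set fK : Finset (Sym2 V) := finOf (augK M Mstar) with hfKdef
  set c : Sym2 V → ℕ := fun e => (evFin e ∩ S).card with hcdef
  have hc2 : ∀ e, c e ≤ 2 := fun e =>
    (Finset.card_le_card (Finset.inter_subset_left)).trans (card_evFin_le e)
  have hScov : ∀ v ∈ S, ∃ e ∈ fM, v ∈ evFin e := by
    intro v hv
    rw [hSdef, mem_finOf] at hv
    obtain ⟨e, he, hve⟩ := hv
    exact ⟨e, mem_finOf.2 he, mem_evFin.2 hve⟩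
  have hScard : S.card ≤ 2 * fM.card := by
    have h1 : S ⊆ fM.biUnion evFin := by
      intro v hv
      obtain ⟨e, he, hve⟩ := hScov v hv
      exact Finset.mem_biUnion.2 ⟨e, he, hve⟩
    calc S.card ≤ (fM.biUnion evFin).card := Finset.card_le_card h1
      _ ≤ ∑ e ∈ fM, (evFin e).card := Finset.card_biUnion_le
      _ ≤ ∑ _e ∈ fM, 2 := Finset.sum_le_sum fun e _ => card_evFin_le e
      _ = 2 * fM.card := by rw [Finset.sum_const, smul_eq_mul, mul_comm]
  have hdisjM : ∀ e ∈ fM, ∀ f ∈ fM, e ≠ f → Disjoint (evFin e) (evFin f) := by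
    intro e he f hf hne
    rw [Finset.disjoint_left]
    intro v hv hv'
    exact matching_disjoint hM (mem_finOf.1 he) (mem_finOf.1 hf) hne (mem_evFin.1 hv)
      (mem_evFin.1 hv')
  have hdisjMs : ∀ e ∈ fMs, ∀ f ∈ fMs, e ≠ f → Disjoint (evFin e) (evFin f) := by
    intro e he f hf hne
    rw [Finset.disjoint_left]
    intro v hv hv'
    exact matching_disjoint hMstar (mem_finOf.1 he) (mem_finOf.1 hf) hne (mem_evFin.1 hv)
      (mem_evFin.1 hv')
  have hsumc : ∑ e ∈ fMs, c e ≤ S.card := by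
    have h : ∑ e ∈ fMs, c e = (fMs.biUnion (fun e => evFin e ∩ S)).card := by
      rw [Finset.card_biUnion]
      intro e he f hf hne
      exact (hdisjMs e he f hf hne).mono Finset.inter_subset_left Finset.inter_subset_left
    rw [h]
    apply Finset.card_le_card
    intro v hv
    obtain ⟨e, _, hv⟩ := Finset.mem_biUnion.1 hv
    exact (Finset.mem_inter.1 hv).2
  -- the M1 edges and the set of their matched endpoints
  set M1 : Finset (Sym2 V) := fMs.filter (fun e => c e = 1) with hM1def
  set U1 : Finset V := M1.biUnion (fun e => evFin e ∩ S) with hU1def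
  have hU1card : U1.card = M1.card := by
    rw [hU1def, Finset.card_biUnion]
    · rw [Finset.sum_congr rfl (fun e he => (Finset.mem_filter.1 he).2)]
      simp [hM1def]
    · intro e he f hf hne
      exact (hdisjMs e (Finset.filter_subset _ _ he) f (Finset.filter_subset _ _ hf)
        hne).mono Finset.inter_subset_left Finset.inter_subset_left
  have hU1S : U1 ⊆ S := by
    intro v hv
    obtain ⟨e, _, hv⟩ := Finset.mem_biUnion.1 hv
    exact (Finset.mem_inter.1 hv).2
  have hU1mem : ∀ u ∈ U1, ∃ a : V, s(a,u) ∈ Mstar ∧ a ∉ mVerts M := by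
    intro u hu
    obtain ⟨e, heM1, hu⟩ := Finset.mem_biUnion.1 hu
    obtain ⟨hu_ev, huS⟩ := Finset.mem_inter.1 hu
    obtain ⟨heMs', hce⟩ := Finset.mem_filter.1 heM1
    exact exposed_partner hMstar (mem_finOf.1 heMs') (mem_evFin.1 hu_ev)
      (mem_finOf.1 (hSdef ▸ huS)) hce
  have hM1card : M1.card ≤ fM.card + fK.card := by
    have hcover : U1 = fM.biUnion (fun e => evFin e ∩ U1) := by
      ext v
      constructor
      · intro hv
        obtain ⟨e, he, hve⟩ := hScov v (hU1S hv)
        exact Finset.mem_biUnion.2 ⟨e, he, Finset.mem_inter.2 ⟨hve, hv⟩⟩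
      · intro hv
        obtain ⟨e, _, hv⟩ := Finset.mem_biUnion.1 hv
        exact (Finset.mem_inter.1 hv).2
    have hcard2 : U1.card = ∑ e ∈ fM, (evFin e ∩ U1).card := by
      conv_lhs => rw [hcover]
      exact Finset.card_biUnion (fun e he f hf hne =>
        (hdisjM e he f hf hne).mono Finset.inter_subset_left Finset.inter_subset_left)
    have hpoint : ∀ e ∈ fM, (evFin e ∩ U1).card ≤ 1 + (if e ∈ augK M Mstar then 1 else 0) := by
      intro e he
      by_cases hle : (evFin e ∩ U1).card ≤ 1
      · exact hle.trans (by split <;> omega)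
      · push_neg at hle
        have hcle : (evFin e ∩ U1).card ≤ 2 :=
          (Finset.card_le_card Finset.inter_subset_left).trans (card_evFin_le e)
        have heqev : evFin e ∩ U1 = evFin e := by
          apply Finset.eq_of_subset_of_card_le Finset.inter_subset_left
          calc (evFin e).card ≤ 2 := card_evFin_le e
            _ ≤ (evFin e ∩ U1).card := by omega
        have heM : e ∈ M := mem_finOf.1 he
        have hK : e ∈ augK M Mstar := by
          obtain ⟨u, v, rfl⟩ := sym2_rep e
          have hu : u ∈ U1 := by
            have h1 : u ∈ evFin s(u,v) := mem_evFin.2 (Sym2.mem_mk_left u v)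
            rw [← heqev] at h1
            exact (Finset.mem_inter.1 h1).2
          have hv : v ∈ U1 := by
            have h1 : v ∈ evFin s(u,v) := mem_evFin.2 (Sym2.mem_mk_right u v)
            rw [← heqev] at h1
            exact (Finset.mem_inter.1 h1).2
          obtain ⟨a, ha, haE⟩ := hU1mem u hu
          obtain ⟨b, hb, hbE⟩ := hU1mem v hv
          exact ⟨heM, a, u, v, b, rfl, ha, by rwa [Sym2.eq_swap], haE, hbE⟩
        rw [if_pos hK]
        omega
    calc M1.card = U1.card := hU1card.symm
      _ = ∑ e ∈ fM, (evFin e ∩ U1).card := hcard2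
      _ ≤ ∑ e ∈ fM, (1 + if e ∈ augK M Mstar then 1 else 0) := Finset.sum_le_sum hpoint
      _ = fM.card + ∑ e ∈ fM, (if e ∈ augK M Mstar then 1 else 0) := by
          rw [Finset.sum_add_distrib, Finset.sum_const, smul_eq_mul, mul_one]
      _ = fM.card + (fM.filter (· ∈ augK M Mstar)).card := by
          rw [← Finset.sum_filter, Finset.sum_const, smul_eq_mul, mul_one]
      _ ≤ fM.card + fK.card := by
          apply Nat.add_le_add_left
          apply Finset.card_le_card
          intro e he
          exact mem_finOf.2 (Finset.mem_filter.1 he).2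
  -- m0 ≤ L1
  have hm0 : (fMs.filter (fun e => c e = 0)).card ≤ (finOf LS).card := by
    apply Finset.card_le_card
    intro e he
    obtain ⟨heMs', hce⟩ := Finset.mem_filter.1 he
    have heMs : e ∈ Mstar := mem_finOf.1 heMs'
    have hnotS : ∀ v ∈ e, v ∉ mVerts M := by
      intro v hv hvS
      have hmem : v ∈ evFin e ∩ S :=
        Finset.mem_inter.2 ⟨mem_evFin.2 hv, hSdef ▸ mem_finOf.2 hvS⟩
      rw [hcdef] at hce
      simp only [Finset.card_eq_zero] at hce
      rw [hce] at hmem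
      exact absurd hmem (Finset.notMem_empty v)
    have heM : e ∉ M := by
      intro heM
      obtain ⟨u, w, rfl⟩ := sym2_rep e
      exact hnotS u (by simp) ⟨_, heM, by simp⟩
    rw [mem_finOf, hLSdef]
    refine ⟨Or.inr ⟨heMs, heM⟩, ?_⟩
    intro f hf hne v hv
    rcases hf with hfM | hfMs
    · intro hvf
      exact hnotS v hv ⟨f, hfM.1, hvf⟩
    · exact matching_disjoint hMstar heMs hfMs.1 (Ne.symm hne) hv
  -- sum split
  have hsplit : 2 * fMs.card = (∑ e ∈ fMs, (2 - c e)) + ∑ e ∈ fMs, c e := by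
    rw [← Finset.sum_add_distrib]
    rw [Finset.sum_congr rfl (fun e _ => Nat.sub_add_cancel (hc2 e))]
    rw [Finset.sum_const, smul_eq_mul, mul_comm]
  have hsub : (∑ e ∈ fMs, (2 - c e)) ≤
      2 * (fMs.filter (fun e => c e = 0)).card + M1.card := by
    calc ∑ e ∈ fMs, (2 - c e)
        ≤ ∑ e ∈ fMs, ((if c e = 0 then 2 else 0) + (if c e = 1 then 1 else 0)) := by
          apply Finset.sum_le_sum
          intro e _
          have := hc2 e
          rcases Nat.lt_or_ge (c e) 1 with h | h
          · have : c e = 0 := by omega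
            simp [this]
          · rcases Nat.lt_or_ge (c e) 2 with h2 | h2
            · have : c e = 1 := by omega
              simp [this]
            · have : c e = 2 := by omega
              simp [this]
      _ = 2 * (fMs.filter (fun e => c e = 0)).card + M1.card := by
          rw [Finset.sum_add_distrib]
          congr 1
          · rw [← Finset.sum_filter]
            simp [Finset.sum_const, mul_comm]
          · rw [← Finset.sum_filter]
            simp [hM1def]
  -- put it together
  have hfin : 2 * fMs.card ≤ fK.card + 3 * fM.card + 2 * (finOf LS).card := by
    have h1 := hsumc.trans hScard
    omega
  rw [← card_finOf Mstar, ← card_finOf M, ← card_finOf (augK M Mstar), ← card_finOf LS]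
  exact hfin

/-- choice of augmenting path -/
def gaug (M Mstar : Set (Sym2 V)) [Inhabited V] (e : Sym2 V) : V × V × V × V :=
  if h : ∃ a u v b : V, e = s(u,v) ∧ s(a,u) ∈ Mstar ∧ s(v,b) ∈ Mstar ∧
      a ∉ mVerts M ∧ b ∉ mVerts M then
    (h.choose, h.choose_spec.choose, h.choose_spec.choose_spec.choose,
      h.choose_spec.choose_spec.choose_spec.choose)
  else default

lemma gaug_spec {M Mstar : Set (Sym2 V)} [Inhabited V] {e : Sym2 V}
    (he : e ∈ augK M Mstar) :
    e = s((gaug M Mstar e).2.1, (gaug M Mstar e).2.2.1) ∧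
    s((gaug M Mstar e).1, (gaug M Mstar e).2.1) ∈ Mstar ∧
    s((gaug M Mstar e).2.2.1, (gaug M Mstar e).2.2.2) ∈ Mstar ∧
    (gaug M Mstar e).1 ∉ mVerts M ∧ (gaug M Mstar e).2.2.2 ∉ mVerts M := by
  have h : ∃ a u v b : V, e = s(u,v) ∧ s(a,u) ∈ Mstar ∧ s(v,b) ∈ Mstar ∧
      a ∉ mVerts M ∧ b ∉ mVerts M := he.2
  have hspec := h.choose_spec.choose_spec.choose_spec.choose_spec
  simp only [gaug, dif_pos h]
  exact ⟨hspec.1, hspec.2.1, hspec.2.2.1, hspec.2.2.2.1, hspec.2.2.2.2⟩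

lemma exposed_ne {G : SimpleGraph V} {Mstar : Set (Sym2 V)}
    (hMstar : IsMatchingSet G Mstar) {a x a' x' : V}
    (h1 : s(a,x) ∈ Mstar) (h2 : s(a',x') ∈ Mstar)
    (hax' : a ≠ x') (ha'x : a' ≠ x) (hxx' : x ≠ x') : a ≠ a' := by
  intro hab
  subst hab
  by_cases he : s(a,x) = s(a,x')
  · rw [Sym2.eq_iff] at he
    rcases he with ⟨-, h⟩ | ⟨h, -⟩
    · exact hxx' h
    · exact hax' h
  · exact matching_disjoint hMstar h1 h2 he (Sym2.mem_mk_left a x) (Sym2.mem_mk_left a x')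

/-- Given a matching `M` and a maximum matching `M*` of `G`, with `L1` the number of
single-edge components of `M ⊕ M*`, the graph `G` contains at least
`2μ(G) − 3|M| − 2·L1` pairwise vertex-disjoint augmenting paths of length exactly three
for `M`. -/
theorem many_length_three_augmenting_paths [Fintype V] (G : SimpleGraph V)
    (M Mstar : Set (Sym2 V)) (hM : IsMatchingSet G M)
    (hMstar : IsMatchingSet G Mstar) (hMstarMax : Mstar.ncard = nu G)
    (D : Set (Sym2 V)) (hD : D = (M \ Mstar) ∪ (Mstar \ M))
    (L1 : ℕ) (hL1 : L1 = {e ∈ D | ∀ f ∈ D, f ≠ e → ∀ v : V, v ∈ e → v ∉ f}.ncard) :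
    ∃ P : Set (V × V × V × V),
      (∀ p ∈ P, s(p.2.1, p.2.2.1) ∈ M ∧ G.Adj p.1 p.2.1 ∧ G.Adj p.2.2.1 p.2.2.2 ∧
        p.1 ≠ p.2.2.2 ∧ p.1 ∉ mVerts M ∧ p.2.2.2 ∉ mVerts M) ∧
      (P.Pairwise fun p q =>
        ({p.1, p.2.1, p.2.2.1, p.2.2.2} : Set V) ∩ {q.1, q.2.1, q.2.2.1, q.2.2.2} = ∅) ∧
      2 * (nu G : ℤ) - 3 * (M.ncard : ℤ) - 2 * (L1 : ℤ) ≤ (P.ncard : ℤ) := by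
  classical
  subst hD
  subst hL1
  have hcount := counting G M Mstar hM hMstar
  rw [hMstarMax] at hcount
  by_cases hKe : augK M Mstar = ∅
  · refine ⟨∅, by simp, Set.pairwise_empty _, ?_⟩
    rw [hKe] at hcount
    simp only [Set.ncard_empty] at hcount ⊢
    omega
  · obtain ⟨e0, he0⟩ := Set.nonempty_iff_ne_empty.2 hKe
    obtain ⟨a0, -⟩ := he0.2
    haveI : Inhabited V := ⟨a0⟩
    refine ⟨gaug M Mstar '' augK M Mstar, ?_, ?_, ?_⟩
    · rintro p hp
      obtain ⟨e, heK, hpe⟩ := hp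
      obtain ⟨hs1, hA, hB, haE, hbE⟩ := gaug_spec heK
      rw [hpe] at hs1 hA hB haE hbE
      obtain ⟨a, u, v, b⟩ := p
      dsimp only at hs1 hA hB haE hbE ⊢
      have heM : s(u, v) ∈ M := hs1 ▸ heK.1
      have hvM : v ∈ mVerts M := ⟨_, heM, Sym2.mem_mk_right u v⟩
      have hadjuv : G.Adj u v := (SimpleGraph.mem_edgeSet G).1 (hM.1 heM)
      refine ⟨heM, (SimpleGraph.mem_edgeSet G).1 (hMstar.1 hA),
        (SimpleGraph.mem_edgeSet G).1 (hMstar.1 hB), ?_, haE, hbE⟩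
      intro hab
      subst hab
      by_cases hee : s(a, u) = s(v, a)
      · rw [Sym2.eq_iff] at hee
        rcases hee with ⟨h1, -⟩ | ⟨-, h2⟩
        · exact haE (by rw [h1]; exact hvM)
        · exact hadjuv.ne h2
      · exact matching_disjoint hMstar hA hB hee (Sym2.mem_mk_left a u)
          (Sym2.mem_mk_right v a)
    · rintro p hp q hq hpq
      obtain ⟨e, heK, hpe⟩ := hp
      obtain ⟨e', heK', hqe⟩ := hq
      obtain ⟨hs1, hA, hB, haE, hbE⟩ := gaug_spec heK
      obtain ⟨hs1', hA', hB', haE', hbE'⟩ := gaug_spec heK'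
      rw [hpe] at hs1 hA hB haE hbE
      rw [hqe] at hs1' hA' hB' haE' hbE'
      have hee' : e ≠ e' := fun h => hpq (by rw [← hpe, ← hqe, h])
      obtain ⟨a, u, v, b⟩ := p
      obtain ⟨a', u', v', b'⟩ := q
      dsimp only at hs1 hA hB haE hbE hs1' hA' hB' haE' hbE' ⊢
      have heM : s(u, v) ∈ M := hs1 ▸ heK.1
      have heM' : s(u', v') ∈ M := hs1' ▸ heK'.1
      have hBsw : s(b, v) ∈ Mstar := by rwa [Sym2.eq_swap]
      have hBsw' : s(b', v') ∈ Mstar := by rwa [Sym2.eq_swap]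
      have hneE : s(u, v) ≠ s(u', v') := fun h => hee' (by rw [hs1, hs1', h])
      have huM : u ∈ mVerts M := ⟨_, heM, Sym2.mem_mk_left u v⟩
      have hvM : v ∈ mVerts M := ⟨_, heM, Sym2.mem_mk_right u v⟩
      have huM' : u' ∈ mVerts M := ⟨_, heM', Sym2.mem_mk_left u' v'⟩
      have hvM' : v' ∈ mVerts M := ⟨_, heM', Sym2.mem_mk_right u' v'⟩
      have huNe : u ∉ s(u', v') :=
        matching_disjoint hM heM heM' hneE (Sym2.mem_mk_left u v)
      have hvNe : v ∉ s(u', v') :=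
        matching_disjoint hM heM heM' hneE (Sym2.mem_mk_right u v)
      have huu' : u ≠ u' := fun h => huNe (h ▸ Sym2.mem_mk_left u' v')
      have huv' : u ≠ v' := fun h => huNe (h ▸ Sym2.mem_mk_right u' v')
      have hvu' : v ≠ u' := fun h => hvNe (h ▸ Sym2.mem_mk_left u' v')
      have hvv' : v ≠ v' := fun h => hvNe (h ▸ Sym2.mem_mk_right u' v')
      have hau' : a ≠ u' := fun h => haE (by rw [h]; exact huM')
      have hav' : a ≠ v' := fun h => haE (by rw [h]; exact hvM')
      have hbu' : b ≠ u' := fun h => hbE (by rw [h]; exact huM')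
      have hbv' : b ≠ v' := fun h => hbE (by rw [h]; exact hvM')
      have hua' : u ≠ a' := fun h => haE' (by rw [← h]; exact huM)
      have hva' : v ≠ a' := fun h => haE' (by rw [← h]; exact hvM)
      have hub' : u ≠ b' := fun h => hbE' (by rw [← h]; exact huM)
      have hvb' : v ≠ b' := fun h => hbE' (by rw [← h]; exact hvM)
      have haa' : a ≠ a' := exposed_ne hMstar hA hA' hau' hua'.symm huu'
      have hab' : a ≠ b' := exposed_ne hMstar hA hBsw' hav' hub'.symm huv'
      have hba' : b ≠ a' := exposed_ne hMstar hBsw hA' hbu' hva'.symm hvu'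
      have hbb' : b ≠ b' := exposed_ne hMstar hBsw hBsw' hbv' hvb'.symm hvv'
      rw [Set.eq_empty_iff_forall_notMem]
      rintro x ⟨hx1, hx2⟩
      simp only [Set.mem_insert_iff, Set.mem_singleton_iff] at hx1 hx2
      rcases hx1 with rfl | rfl | rfl | rfl <;>
        rcases hx2 with rfl | rfl | rfl | rfl <;> simp_all
    · have hinj : Set.InjOn (gaug M Mstar) (augK M Mstar) := by
        intro e he e' he' h
        rw [(gaug_spec he).1, (gaug_spec he').1, h]
      rw [Set.ncard_image_of_injOn hinj]
      omega
end
end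

section
/- Let G be a graph, let M be a matching of G, let M' ⊆ M, and for each edge e ∈ M' fix an orientation e = (u_e, v_e). Let N_L and N_R be matchings of G such that: every edge of N_L joins u_e for some e ∈ M' to a vertex not in V(M); every edge of N_R joins v_e for some e ∈ M' to a vertex not in V(M); and no vertex outside V(M) is an endpoint of both an edge of N_L and an edge of N_R. Then μ(G) ≥ |M| + |{e ∈ M' : u_e ∈ V(N_L) and v_e ∈ V(N_R)}|. -/
open scoped Classical

noncomputable section

variable {V : Type*}

/-!
For every edge `e = s(u_e, v_e)` of `M'` whose two endpoints are covered by `N_L` and `N_R`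
respectively, the edges of `N_L` at `u_e` and of `N_R` at `v_e` form, together with `e`, an
augmenting path of length three: their outer ends lie outside `V(M)`, and they are distinct
because no such vertex is covered by both `N_L` and `N_R`. These paths are vertex-disjoint, so
replacing each such `e` by its two wing edges gains one edge per `e`.
-/

variable {G : SimpleGraph V}

theorem mVerts_mono {A B : Set (Sym2 V)} (hAB : A ⊆ B) : mVerts A ⊆ mVerts B :=
  fun _ ⟨e, he, hve⟩ => ⟨e, hAB he, hve⟩

theorem mVerts_union (A B : Set (Sym2 V)) : mVerts (A ∪ B) = mVerts A ∪ mVerts B := by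
  ext v
  simp only [mVerts, Set.mem_ofPred_eq, Set.mem_union, or_and_right, exists_or]

theorem disjoint_of_disjoint_mVerts {A B : Set (Sym2 V)} (h : Disjoint (mVerts A) (mVerts B)) :
    Disjoint A B :=
  Set.disjoint_left.2 fun e heA heB =>
    Set.disjoint_left.1 h ⟨e, heA, e.out_fst_mem⟩ ⟨e, heB, e.out_fst_mem⟩

namespace IsMatchingSet

variable {M A B S : Set (Sym2 V)}

theorem eq_of_mem_of_mem (hM : IsMatchingSet G M) {e f : Sym2 V} (he : e ∈ M) (hf : f ∈ M)
    {v : V} (hve : v ∈ e) (hvf : v ∈ f) : e = f := by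
  by_contra hef
  exact hM.2 he hf hef v hve hvf

theorem mono (hA : IsMatchingSet G A) (hBA : B ⊆ A) : IsMatchingSet G B :=
  ⟨hBA.trans hA.1, hA.2.mono hBA⟩

theorem union (hA : IsMatchingSet G A) (hB : IsMatchingSet G B)
    (hAB : Disjoint (mVerts A) (mVerts B)) : IsMatchingSet G (A ∪ B) := by
  refine ⟨Set.union_subset hA.1 hB.1, ?_⟩
  rintro e (he | he) f (hf | hf) hef v hve hvf
  · exact hef (hA.eq_of_mem_of_mem he hf hve hvf)
  · exact Set.disjoint_left.1 hAB ⟨e, he, hve⟩ ⟨f, hf, hvf⟩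
  · exact Set.disjoint_right.1 hAB ⟨e, he, hve⟩ ⟨f, hf, hvf⟩
  · exact hef (hB.eq_of_mem_of_mem he hf hve hvf)

theorem disjoint_mVerts_sdiff (hM : IsMatchingSet G M) (hSM : S ⊆ M) :
    Disjoint (mVerts (M \ S)) (mVerts S) := by
  rw [Set.disjoint_left]
  rintro v ⟨e, ⟨heM, heS⟩, hve⟩ ⟨f, hfS, hvf⟩
  exact heS (hM.eq_of_mem_of_mem heM (hSM hfS) hve hvf ▸ hfS)

theorem injOn (hM : IsMatchingSet G M) {o : Sym2 V → V} (ho : ∀ e ∈ M, o e ∈ e) :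
    Set.InjOn o M :=
  fun e he f hf hef => hM.eq_of_mem_of_mem he hf (ho e he) (hef ▸ ho f hf)

theorem disjoint_image_image (hM : IsMatchingSet G M) {o o' : Sym2 V → V}
    (ho : ∀ e ∈ M, o e ∈ e) (ho' : ∀ e ∈ M, o' e ∈ e) (hne : ∀ e ∈ M, o e ≠ o' e) :
    Disjoint (o '' M) (o' '' M) := by
  rw [Set.disjoint_left]
  rintro _ ⟨e, he, rfl⟩ ⟨f, hf, hfe⟩
  obtain rfl := hM.eq_of_mem_of_mem he hf (ho e he) (hfe ▸ ho' f hf)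
  exact hne e he hfe.symm

theorem ncard_le_nu_s17 [Finite V] (hM : IsMatchingSet G M) : M.ncard ≤ nu G := by
  refine le_csSup ⟨Nat.card (Sym2 V), ?_⟩ ⟨M, hM, rfl⟩
  rintro _ ⟨N, -, rfl⟩
  rw [← Set.ncard_univ]
  exact Set.ncard_le_ncard (Set.subset_univ N)

/-- The matching `M \ S ∪ L ∪ R` witnesses the bound. -/
theorem add_ncard_le_nu [Finite V] {L R : Set (Sym2 V)} (hM : IsMatchingSet G M) (hSM : S ⊆ M)
    (hL : IsMatchingSet G L) (hR : IsMatchingSet G R)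
    (hML : Disjoint (mVerts (M \ S)) (mVerts L)) (hMR : Disjoint (mVerts (M \ S)) (mVerts R))
    (hLR : Disjoint (mVerts L) (mVerts R)) (hSL : S.ncard ≤ L.ncard) (hSR : S.ncard ≤ R.ncard) :
    M.ncard + S.ncard ≤ nu G := by
  have hMLR : Disjoint (mVerts (M \ S ∪ L)) (mVerts R) := by
    rw [mVerts_union]
    exact Set.disjoint_union_left.2 ⟨hMR, hLR⟩
  have hT : IsMatchingSet G (M \ S ∪ L ∪ R) :=
    ((hM.mono Set.sdiff_subset).union hL hML).union hR hMLR
  have hcard : (M \ S ∪ L ∪ R).ncard = M.ncard - S.ncard + L.ncard + R.ncard := by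
    rw [Set.ncard_union_eq (disjoint_of_disjoint_mVerts hMLR),
      Set.ncard_union_eq (disjoint_of_disjoint_mVerts hML), Set.ncard_sdiff hSM]
  have hSM' : S.ncard ≤ M.ncard := Set.ncard_le_ncard hSM
  have := hT.ncard_le_nu_s17
  omega

end IsMatchingSet

section Wing

variable {N S : Set (Sym2 V)} {X : Set V} {o : Sym2 V → V}

def IsCrossing (X : Set V) (N : Set (Sym2 V)) : Prop :=
  ∀ f ∈ N, ∃ x ∈ X, ∃ w ∉ X, f = s(x, w)

theorem isCrossing_of_forall_eq_mk {M' : Set (Sym2 V)}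
    (hoX : ∀ e ∈ M', o e ∈ X) (hN : ∀ f ∈ N, ∃ e ∈ M', ∃ w, w ∉ X ∧ f = s(o e, w)) :
    IsCrossing X N := by
  intro f hf
  obtain ⟨e, he, w, hw, rfl⟩ := hN f hf
  exact ⟨o e, hoX e he, w, hw, rfl⟩

def wing (N : Set (Sym2 V)) (o : Sym2 V → V) (S : Set (Sym2 V)) : Set (Sym2 V) :=
  {f ∈ N | ∃ e ∈ S, o e ∈ f}

theorem wing_subset : wing N o S ⊆ N := fun _ hf => hf.1

theorem eq_of_mem_mk_of_notMem {x w a : V} (hw : w ∉ X) (ha : a ∈ s(x, w)) (haX : a ∈ X) :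
    a = x := by
  rcases Sym2.mem_iff.1 ha with rfl | rfl
  · rfl
  · exact absurd haX hw

theorem mVerts_wing_subset (hN : IsCrossing X N)
    (hoX : ∀ e ∈ S, o e ∈ X) : mVerts (wing N o S) ⊆ o '' S ∪ (mVerts N \ X) := by
  rintro v ⟨f, ⟨hfN, e, heS, hef⟩, hvf⟩
  obtain ⟨x, -, w, hw, rfl⟩ := hN f hfN
  have hex : o e = x := eq_of_mem_mk_of_notMem hw hef (hoX e heS)
  rcases Sym2.mem_iff.1 hvf with rfl | rfl
  · exact Or.inl ⟨e, heS, hex⟩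
  · exact Or.inr ⟨⟨_, hfN, hvf⟩, hw⟩

theorem ncard_le_ncard_wing [Finite V] (hN : IsCrossing X N)
    (hoX : ∀ e ∈ S, o e ∈ X) (hoN : ∀ e ∈ S, o e ∈ mVerts N) (hinj : Set.InjOn o S) :
    S.ncard ≤ (wing N o S).ncard := by
  choose! φ hφN hoφ using hoN
  refine Set.ncard_le_ncard_of_injOn φ (fun e he => ⟨hφN e he, e, he, hoφ e he⟩)
    fun e₁ h₁ e₂ h₂ hφ => hinj h₁ h₂ ?_
  obtain ⟨x, -, w, hw, hx⟩ := hN _ (hφN e₁ h₁)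
  have hmem₁ := hoφ e₁ h₁
  have hmem₂ := hoφ e₂ h₂
  rw [hx] at hmem₁
  rw [← hφ, hx] at hmem₂
  rw [eq_of_mem_mk_of_notMem hw hmem₁ (hoX e₁ h₁), eq_of_mem_mk_of_notMem hw hmem₂ (hoX e₂ h₂)]

theorem disjoint_mVerts_sdiff_wing {M : Set (Sym2 V)} (hM : IsMatchingSet G M) (hSM : S ⊆ M)
    (hN : IsCrossing (mVerts M) N) (ho : ∀ e ∈ S, o e ∈ e) :
    Disjoint (mVerts (M \ S)) (mVerts (wing N o S)) := by
  have himage : o '' S ⊆ mVerts S := by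
    rintro _ ⟨e, he, rfl⟩
    exact ⟨e, he, ho e he⟩
  refine Disjoint.mono_right (mVerts_wing_subset hN fun e he => ⟨e, hSM he, ho e he⟩) ?_
  exact Set.disjoint_union_right.2 ⟨(hM.disjoint_mVerts_sdiff hSM).mono_right himage,
    Set.disjoint_sdiff_right.mono_left (mVerts_mono Set.sdiff_subset)⟩

theorem disjoint_mVerts_wing_wing {M NL NR : Set (Sym2 V)} {uo vo : Sym2 V → V}
    (hM : IsMatchingSet G M) (hSM : S ⊆ M)
    (hNL : IsCrossing (mVerts M) NL) (hNR : IsCrossing (mVerts M) NR)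
    (huo : ∀ e ∈ S, uo e ∈ e) (hvo : ∀ e ∈ S, vo e ∈ e) (hne : ∀ e ∈ S, uo e ≠ vo e)
    (hsep : ∀ w, w ∉ mVerts M → w ∈ mVerts NL → w ∉ mVerts NR) :
    Disjoint (mVerts (wing NL uo S)) (mVerts (wing NR vo S)) := by
  have huoX : uo '' S ⊆ mVerts M := by
    rintro _ ⟨e, he, rfl⟩
    exact ⟨e, hSM he, huo e he⟩
  have hvoX : vo '' S ⊆ mVerts M := by
    rintro _ ⟨e, he, rfl⟩
    exact ⟨e, hSM he, hvo e he⟩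
  have houter : Disjoint (mVerts NL \ mVerts M) (mVerts NR \ mVerts M) :=
    Set.disjoint_left.2 fun w ⟨hwL, hwX⟩ ⟨hwR, _⟩ => hsep w hwX hwL hwR
  refine Disjoint.mono (mVerts_wing_subset hNL fun e he => huoX ⟨e, he, rfl⟩)
    (mVerts_wing_subset hNR fun e he => hvoX ⟨e, he, rfl⟩) ?_
  refine Set.disjoint_union_left.2 ⟨Set.disjoint_union_right.2 ⟨?_, ?_⟩,
    Set.disjoint_union_right.2 ⟨?_, houter⟩⟩
  · exact (hM.mono hSM).disjoint_image_image huo hvo hne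
  · exact Set.disjoint_sdiff_right.mono_left huoX
  · exact Set.disjoint_sdiff_left.mono_right hvoX

end Wing

/-- If `M' ⊆ M` with each edge `e ∈ M'` oriented as `(u_e, v_e)`, and `N_L`, `N_R` are
matchings of `G` matching, respectively, vertices `u_e` and `v_e` to vertices outside
`V(M)`, with no vertex outside `V(M)` used by both, then
`μ(G) ≥ |M| + |{e ∈ M' : u_e ∈ V(N_L) ∧ v_e ∈ V(N_R)}|`. -/
theorem augment_by_disjoint_wings [Fintype V] (G : SimpleGraph V)
    (M M' : Set (Sym2 V)) (hM : IsMatchingSet G M) (hM'M : M' ⊆ M)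
    (uo vo : Sym2 V → V) (hor : ∀ e ∈ M', e = s(uo e, vo e))
    (NL NR : Set (Sym2 V)) (hNL : IsMatchingSet G NL) (hNR : IsMatchingSet G NR)
    (hNLe : ∀ f ∈ NL, ∃ e ∈ M', ∃ w, w ∉ mVerts M ∧ f = s(uo e, w))
    (hNRe : ∀ f ∈ NR, ∃ e ∈ M', ∃ w, w ∉ mVerts M ∧ f = s(vo e, w))
    (hsep : ∀ w, w ∉ mVerts M → w ∈ mVerts NL → w ∉ mVerts NR) :
    M.ncard + {e ∈ M' | uo e ∈ mVerts NL ∧ vo e ∈ mVerts NR}.ncard ≤ nu G := by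
  set S := {e ∈ M' | uo e ∈ mVerts NL ∧ vo e ∈ mVerts NR}
  have hSM : S ⊆ M := fun e he => hM'M he.1
  have huo : ∀ e ∈ M', uo e ∈ e := fun e he => by
    simpa only [← hor e he] using Sym2.mem_mk_left (uo e) (vo e)
  have hvo : ∀ e ∈ M', vo e ∈ e := fun e he => by
    simpa only [← hor e he] using Sym2.mem_mk_right (uo e) (vo e)
  have huoS : ∀ e ∈ S, uo e ∈ e := fun e he => huo e he.1
  have hvoS : ∀ e ∈ S, vo e ∈ e := fun e he => hvo e he.1
  have hne : ∀ e ∈ S, uo e ≠ vo e := fun e he => by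
    have hadj := hM.1 (hSM he)
    rw [hor e he.1, SimpleGraph.mem_edgeSet] at hadj
    exact hadj.ne
  have hL : IsCrossing (mVerts M) NL :=
    isCrossing_of_forall_eq_mk (fun e he => ⟨e, hM'M he, huo e he⟩) hNLe
  have hR : IsCrossing (mVerts M) NR :=
    isCrossing_of_forall_eq_mk (fun e he => ⟨e, hM'M he, hvo e he⟩) hNRe
  refine hM.add_ncard_le_nu hSM (hNL.mono wing_subset) (hNR.mono wing_subset)
    (disjoint_mVerts_sdiff_wing hM hSM hL huoS) (disjoint_mVerts_sdiff_wing hM hSM hR hvoS)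
    (disjoint_mVerts_wing_wing hM hSM hL hR huoS hvoS hne hsep) ?_ ?_
  · exact ncard_le_ncard_wing hL (fun e he => ⟨e, hSM he, huoS e he⟩) (fun e he => he.2.1)
      ((hM.mono hSM).injOn huoS)
  · exact ncard_le_ncard_wing hR (fun e he => ⟨e, hSM he, hvoS e he⟩) (fun e he => he.2.2)
      ((hM.mono hSM).injOn hvoS)
end
end
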